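/- arXiv:0807.4371 — 3 statements merged into one kernel-verified Lean document; each statement's English description precedes it below -/
import Mathlib

section
/- (Cotlar's lemma, Hilbert-space-valued form.) Let K₁ and K₂ be complex Hilbert spaces and let (T_k)_{k∈ℤ} be a family of bounded linear operators from K₁ to K₂ with only finitely many nonzero T_k. Assume there exists a family (α_k)_{k∈ℤ} of nonnegative real numbers with ∑_{k∈ℤ} α_k < ∞ such that for all i, j ∈ ℤ, max{ ‖T_i* T_j‖_{B(K₁)}, ‖T_i T_j*‖_{B(K₂)} } ≤ α_{i−j}². Then ‖∑_{k∈ℤ} T_k‖_{B(K₁,K₂)} ≤ ∑_{k∈ℤ} α_k. -/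
open scoped ENNReal NNReal Topology

noncomputable section

open ContinuousLinearMap in
/-- Expansion of a power of a finite sum in a (possibly noncommutative) semiring as a sum
over words. -/
theorem cotlar_sum_pow {R β : Type*} [Semiring R] [Fintype β] (g : β → R) :
    ∀ m : ℕ, (∑ b, g b) ^ m = ∑ v : Fin m → β, (List.ofFn fun k => g (v k)).prod
  | 0 => by simp
  | m + 1 => by
    calc (∑ b, g b) ^ (m + 1) = (∑ b, g b) * (∑ b, g b) ^ m := pow_succ' _ _
    _ = ∑ b, ∑ v : Fin m → β, g b * (List.ofFn fun k => g (v k)).prod := by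
        rw [cotlar_sum_pow g m, Finset.sum_mul_sum]
    _ = ∑ p : β × (Fin m → β), g p.1 * (List.ofFn fun k => g (p.2 k)).prod := by
        rw [Fintype.sum_prod_type]
    _ = ∑ v : Fin (m + 1) → β, (List.ofFn fun k => g (v k)).prod := by
        refine Fintype.sum_equiv (Fin.consEquiv fun _ : Fin (m + 1) => β) _ _ fun p => ?_
        simp [Fin.consEquiv, List.ofFn_succ]

open ContinuousLinearMap in
/-- Regrouping of an alternating word of operators. -/
theorem cotlar_regroup {E F : Type*}
    [NormedAddCommGroup E] [NormedSpace ℂ E] [NormedAddCommGroup F] [NormedSpace ℂ F]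
    (U : ℤ → (F →L[ℂ] E)) (V : ℤ → (E →L[ℂ] F)) :
    ∀ (n : ℕ) (v : Fin (n + 1) → ℤ × ℤ),
      (List.ofFn fun k => (U (v k).1) ∘L (V (v k).2)).prod
        = ((U (v 0).1) ∘L
            (List.ofFn fun k : Fin n =>
              (V (v k.castSucc).2) ∘L (U (v k.succ).1)).prod) ∘L (V (v (Fin.last n)).2)
  | 0, v => by
    simp [ContinuousLinearMap.one_def]
    rfl
  | n + 1, v => by
    rw [List.ofFn_succ, List.prod_cons, cotlar_regroup U V n (fun k => v k.succ)]
    rw [List.ofFn_succ (f := fun k : Fin (n + 1) => (V (v k.castSucc).2) ∘L (U (v k.succ).1)),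
      List.prod_cons]
    simp only [Fin.succ_castSucc, Fin.castSucc_zero, Fin.succ_last]
    simp only [ContinuousLinearMap.mul_def]
    simp only [ContinuousLinearMap.comp_assoc]

set_option maxHeartbeats 2000000 in
open ContinuousLinearMap in
/-- **Cotlar's lemma** (Hilbert-space-valued form). If `(T k)_(k ∈ ℤ)` is a family of
bounded operators between complex Hilbert spaces `K₁` and `K₂`, only finitely many of
which are nonzero, and `(α k)_(k ∈ ℤ)` is a summable family of nonnegative reals with
`max (‖(T i)* ∘ T j‖, ‖T i ∘ (T j)*‖) ≤ α (i - j) ^ 2` for all `i j`, then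
`‖∑ k, T k‖ ≤ ∑ k, α k`. -/
theorem cotlar_lemma
    {K₁ K₂ : Type*}
    [NormedAddCommGroup K₁] [InnerProductSpace ℂ K₁] [CompleteSpace K₁]
    [NormedAddCommGroup K₂] [InnerProductSpace ℂ K₂] [CompleteSpace K₂]
    (T : ℤ → (K₁ →L[ℂ] K₂)) (hfin : (Function.support T).Finite)
    (α : ℤ → ℝ) (hα : ∀ k, 0 ≤ α k) (hsum : Summable α)
    (hbound : ∀ i j : ℤ,
      max ‖(ContinuousLinearMap.adjoint (T i)).comp (T j)‖
          ‖(T i).comp (ContinuousLinearMap.adjoint (T j))‖ ≤ α (i - j) ^ 2) :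
    ‖∑ᶠ k, T k‖ ≤ ∑' k, α k := by
  set F : Finset ℤ := hfin.toFinset with hF
  set A : ℝ := ∑' k, α k with hA
  have hA0 : 0 ≤ A := tsum_nonneg hα
  have hαA : ∀ k, α k ≤ A := fun k => Summable.le_tsum hsum k fun j _ => hα j
  have L1 : ∀ c : ℤ, ∑ x ∈ F, α (c - x) ≤ A := by
    intro c
    have hs : Summable fun x => α (c - x) := (Equiv.subLeft c).summable_iff.mpr hsum
    calc ∑ x ∈ F, α (c - x) ≤ ∑' x : ℤ, α (c - x) := Summable.sum_le_tsum F (fun _ _ => hα _) hs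
      _ = A := (Equiv.subLeft c).tsum_eq α
  set S : K₁ →L[ℂ] K₂ := ∑ k ∈ F, T k with hS
  rw [finsum_eq_sum T hfin]
  set C : ℤ × ℤ → (K₁ →L[ℂ] K₁) := fun p => (adjoint (T p.1)) ∘L (T p.2) with hC
  set B : K₁ →L[ℂ] K₁ := (adjoint S) ∘L S with hB
  set M : ℝ := (F.card : ℝ) with hM
  have hM0 : 0 ≤ M := Nat.cast_nonneg _
  -- basic norm estimates
  have hTnorm : ∀ i, ‖T i‖ ≤ α 0 := by
    intro i
    have h1 : ‖(adjoint (T i)).comp (T i)‖ ≤ α 0 ^ 2 := by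
      have := (le_max_left _ _).trans (hbound i i)
      simpa using this
    have h2 : ‖T i‖ * ‖T i‖ = ‖(adjoint (T i)).comp (T i)‖ :=
      (norm_adjoint_comp_self _).symm
    nlinarith [norm_nonneg (T i), hα 0]
  have hCnorm : ∀ p : ℤ × ℤ, ‖C p‖ ≤ α (p.1 - p.2) ^ 2 := fun p =>
    (le_max_left _ _).trans (hbound p.1 p.2)
  have hDnorm : ∀ i j : ℤ, ‖(T i) ∘L (adjoint (T j))‖ ≤ α (i - j) ^ 2 := fun i j =>
    (le_max_right _ _).trans (hbound i j)
  have hBsum : B = ∑ b : ↥(F ×ˢ F), C ↑b := by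
    rw [Finset.sum_coe_sort (F ×ˢ F) C, Finset.sum_product, hB, hS,
      map_sum (ContinuousLinearMap.adjoint : (K₁ →L[ℂ] K₂) ≃ₗᵢ⋆[ℂ] _) T F,
      ContinuousLinearMap.finset_sum_comp]
    refine Finset.sum_congr rfl fun i _ => ?_
    rw [ContinuousLinearMap.comp_finset_sum]
  have hBsa : IsSelfAdjoint B := by
    rw [ContinuousLinearMap.isSelfAdjoint_iff']
    simp [hB]
  have hnormpow : ∀ n : ℕ, ‖B ^ 2 ^ n‖ = ‖B‖ ^ 2 ^ n := by
    intro n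
    have := hBsa.nnnorm_pow_two_pow n
    rw [← coe_nnnorm, this]; push_cast; ring
  have hSB : ‖S‖ * ‖S‖ = ‖B‖ := (norm_adjoint_comp_self S).symm
  -- the word estimate
  have hword : ∀ (n : ℕ) (v : Fin (n + 1) → ℤ × ℤ),
      ‖(List.ofFn fun k => C (v k)).prod‖ ≤
        α 0 * ((∏ k : Fin (n + 1), α ((v k).1 - (v k).2)) *
          ∏ k : Fin n, α ((v k.castSucc).2 - (v k.succ).1)) := by
    intro n v
    set W := (List.ofFn fun k => C (v k)).prod with hW
    set B1 : ℝ := ∏ k : Fin (n + 1), α ((v k).1 - (v k).2) with hB1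
    set B2 : ℝ := ∏ k : Fin n, α ((v k.castSucc).2 - (v k.succ).1) with hB2
    have hB1nn : 0 ≤ B1 := Finset.prod_nonneg fun _ _ => hα _
    have hB2nn : 0 ≤ B2 := Finset.prod_nonneg fun _ _ => hα _
    have hb1 : ‖W‖ ≤ B1 ^ 2 := by
      have hne : (List.ofFn fun k => C (v k)) ≠ [] := by
        simp [← List.length_eq_zero_iff]
      calc ‖W‖ ≤ ((List.ofFn fun k => C (v k)).map norm).prod := List.norm_prod_le' hne
        _ = ∏ k : Fin (n + 1), ‖C (v k)‖ := by
            rw [List.map_ofFn, List.prod_ofFn]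
            rfl
        _ ≤ ∏ k : Fin (n + 1), α ((v k).1 - (v k).2) ^ 2 :=
            Finset.prod_le_prod (fun _ _ => norm_nonneg _) (fun k _ => hCnorm (v k))
        _ = B1 ^ 2 := by rw [hB1, ← Finset.prod_pow]
    have hadj : ∀ i : ℤ, ‖(adjoint (T i) : K₂ →L[ℂ] K₁)‖ = ‖T i‖ := fun i =>
      LinearIsometryEquiv.norm_map ContinuousLinearMap.adjoint (T i)
    have hb2 : ‖W‖ ≤ α 0 ^ 2 * B2 ^ 2 := by
      rw [hW, hC, cotlar_regroup (fun i => adjoint (T i)) T n v]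
      match n with
      | 0 =>
        simp only [List.ofFn_zero, List.prod_nil, ContinuousLinearMap.comp_id,
          ← ContinuousLinearMap.one_def, hB2, Finset.univ_eq_empty, Finset.prod_empty]
        calc ‖(adjoint (T (v 0).1) ∘L 1) ∘L T (v (Fin.last 0)).2‖
            ≤ ‖adjoint (T (v 0).1) ∘L (1 : K₂ →L[ℂ] K₂)‖ * ‖T (v (Fin.last 0)).2‖ :=
              opNorm_comp_le _ _
          _ = ‖adjoint (T (v 0).1)‖ * ‖T (v (Fin.last 0)).2‖ := by
              simp [ContinuousLinearMap.one_def]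
          _ ≤ α 0 * α 0 := by
              rw [hadj]
              exact mul_le_mul (hTnorm _) (hTnorm _) (norm_nonneg _) (hα 0)
          _ = α 0 ^ 2 * 1 ^ 2 := by ring
      | m + 1 =>
        have hPne : (List.ofFn fun k : Fin (m + 1) =>
            (T (v k.castSucc).2) ∘L (adjoint (T (v k.succ).1))) ≠ [] := by
          simp [← List.length_eq_zero_iff]
        have hP : ‖(List.ofFn fun k : Fin (m + 1) =>
            (T (v k.castSucc).2) ∘L (adjoint (T (v k.succ).1))).prod‖ ≤ B2 ^ 2 := by
          calc ‖(List.ofFn fun k : Fin (m + 1) =>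
              (T (v k.castSucc).2) ∘L (adjoint (T (v k.succ).1))).prod‖
              ≤ ((List.ofFn fun k : Fin (m + 1) =>
                (T (v k.castSucc).2) ∘L (adjoint (T (v k.succ).1))).map norm).prod :=
                List.norm_prod_le' hPne
            _ = ∏ k : Fin (m + 1), ‖(T (v k.castSucc).2) ∘L (adjoint (T (v k.succ).1))‖ := by
                rw [List.map_ofFn, List.prod_ofFn]
                rfl
            _ ≤ ∏ k : Fin (m + 1), α ((v k.castSucc).2 - (v k.succ).1) ^ 2 :=
                Finset.prod_le_prod (fun _ _ => norm_nonneg _) (fun k _ => hDnorm _ _)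
            _ = B2 ^ 2 := by rw [hB2, ← Finset.prod_pow]
        calc ‖((adjoint (T (v 0).1)) ∘L _) ∘L (T (v (Fin.last (m + 1))).2)‖
            ≤ ‖(adjoint (T (v 0).1)) ∘L _‖ * ‖T (v (Fin.last (m + 1))).2‖ := opNorm_comp_le _ _
          _ ≤ (‖adjoint (T (v 0).1)‖ * ‖(List.ofFn fun k : Fin (m + 1) =>
                (T (v k.castSucc).2) ∘L (adjoint (T (v k.succ).1))).prod‖) *
                ‖T (v (Fin.last (m + 1))).2‖ :=
              mul_le_mul_of_nonneg_right (opNorm_comp_le _ _) (norm_nonneg _)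
          _ ≤ (α 0 * B2 ^ 2) * α 0 := by
              refine mul_le_mul (mul_le_mul ?_ hP (norm_nonneg _) (hα 0)) (hTnorm _)
                (norm_nonneg _) (mul_nonneg (hα 0) (sq_nonneg _))
              rw [hadj]; exact hTnorm _
          _ = α 0 ^ 2 * B2 ^ 2 := by ring
    have hsq : ‖W‖ * ‖W‖ ≤ (B1 ^ 2) * (α 0 ^ 2 * B2 ^ 2) :=
      mul_le_mul hb1 hb2 (norm_nonneg _) (by positivity)
    nlinarith [norm_nonneg W, hα 0, mul_nonneg hB1nn hB2nn,
      mul_nonneg (hα 0) (mul_nonneg hB1nn hB2nn)]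
  -- the chain sums
  have hpair : ∀ c : ℤ, ∑ b : ↥(F ×ˢ F), α (c - (b : ℤ × ℤ).1) * α ((b : ℤ × ℤ).1 - (b : ℤ × ℤ).2)
      ≤ A ^ 2 := by
    intro c
    rw [Finset.sum_coe_sort (F ×ˢ F) (fun p => α (c - p.1) * α (p.1 - p.2)),
      Finset.sum_product]
    calc ∑ i ∈ F, ∑ j ∈ F, α (c - i) * α (i - j)
        = ∑ i ∈ F, α (c - i) * ∑ j ∈ F, α (i - j) := by
          simp [Finset.mul_sum]
      _ ≤ ∑ i ∈ F, α (c - i) * A :=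
          Finset.sum_le_sum fun i _ => mul_le_mul_of_nonneg_left (L1 i) (hα _)
      _ = (∑ i ∈ F, α (c - i)) * A := by rw [Finset.sum_mul]
      _ ≤ A * A := mul_le_mul_of_nonneg_right (L1 c) hA0
      _ = A ^ 2 := (sq A).symm
  have hb0 : ∑ b : ↥(F ×ˢ F), α ((b : ℤ × ℤ).1 - (b : ℤ × ℤ).2) ≤ M * A := by
    rw [Finset.sum_coe_sort (F ×ˢ F) (fun p => α (p.1 - p.2)), Finset.sum_product]
    calc ∑ i ∈ F, ∑ j ∈ F, α (i - j) ≤ ∑ _i ∈ F, A := Finset.sum_le_sum fun i _ => L1 i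
      _ = M * A := by rw [Finset.sum_const, nsmul_eq_mul]
  have hsplit : ∀ (n : ℕ) (f : (Fin (n + 2) → ℤ × ℤ) → ℝ),
      ∑ v : Fin (n + 2) → ↥(F ×ˢ F), f (fun k => ↑(v k)) =
        ∑ b : ↥(F ×ˢ F), ∑ w : Fin (n + 1) → ↥(F ×ˢ F),
          f (Fin.cons ↑b fun k => ↑(w k)) := by
    intro n f
    refine (Fintype.sum_equiv (Fin.consEquiv fun _ : Fin (n + 2) => ↥(F ×ˢ F)).symm _
      (fun p => f (Fin.cons ↑p.1 fun k => ↑(p.2 k))) fun v => ?_).trans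
      (Fintype.sum_prod_type _)
    show f (fun k => ↑(v k)) = f (Fin.cons ↑(v 0) fun k => ↑(v k.succ))
    congr 1
    funext k
    refine Fin.cases ?_ ?_ k <;> simp
  have hconsterm : ∀ (n : ℕ) (b : ↥(F ×ˢ F)) (w : Fin (n + 1) → ↥(F ×ˢ F)),
      ((∏ k : Fin (n + 2), α (((Fin.cons (↑b) fun k => ↑(w k) : Fin (n + 2) → ℤ × ℤ) k).1 -
            ((Fin.cons (↑b) fun k => ↑(w k) : Fin (n + 2) → ℤ × ℤ) k).2)) *
          ∏ k : Fin (n + 1), α (((Fin.cons (↑b) fun k => ↑(w k) : Fin (n + 2) → ℤ × ℤ) k.castSucc).2 -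
            ((Fin.cons (↑b) fun k => ↑(w k) : Fin (n + 2) → ℤ × ℤ) k.succ).1))
        = α ((b : ℤ × ℤ).1 - (b : ℤ × ℤ).2) *
            (α ((b : ℤ × ℤ).2 - ((w 0 : ℤ × ℤ)).1) *
              ((∏ k : Fin (n + 1), α ((w k : ℤ × ℤ).1 - (w k : ℤ × ℤ).2)) *
                ∏ k : Fin n, α ((w k.castSucc : ℤ × ℤ).2 - (w k.succ : ℤ × ℤ).1))) := by
    intro n b w
    rw [Fin.prod_univ_succ (f := fun k : Fin (n + 2) =>
        α (((Fin.cons (↑b) fun k => ↑(w k) : Fin (n + 2) → ℤ × ℤ) k).1 -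
          ((Fin.cons (↑b) fun k => ↑(w k) : Fin (n + 2) → ℤ × ℤ) k).2)),
      Fin.prod_univ_succ (f := fun k : Fin (n + 1) =>
        α (((Fin.cons (↑b) fun k => ↑(w k) : Fin (n + 2) → ℤ × ℤ) k.castSucc).2 -
          ((Fin.cons (↑b) fun k => ↑(w k) : Fin (n + 2) → ℤ × ℤ) k.succ).1))]
    simp only [Fin.cons_zero, Fin.cons_succ, Fin.castSucc_zero, ← Fin.succ_castSucc]
    ring
  have hchain : ∀ (n : ℕ) (c : ℤ),
      ∑ v : Fin (n + 1) → ↥(F ×ˢ F),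
        α (c - ((v 0 : ℤ × ℤ)).1) *
          ((∏ k : Fin (n + 1), α ((v k : ℤ × ℤ).1 - (v k : ℤ × ℤ).2)) *
            ∏ k : Fin n, α ((v k.castSucc : ℤ × ℤ).2 - (v k.succ : ℤ × ℤ).1))
        ≤ A ^ (2 * n + 2) := by
    intro n
    induction n with
    | zero =>
      intro c
      calc ∑ v : Fin 1 → ↥(F ×ˢ F),
            α (c - ((v 0 : ℤ × ℤ)).1) *
              ((∏ k : Fin 1, α ((v k : ℤ × ℤ).1 - (v k : ℤ × ℤ).2)) *
                ∏ k : Fin 0, α ((v k.castSucc : ℤ × ℤ).2 - (v k.succ : ℤ × ℤ).1))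
          = ∑ b : ↥(F ×ˢ F), α (c - (b : ℤ × ℤ).1) * α ((b : ℤ × ℤ).1 - (b : ℤ × ℤ).2) := by
            refine Fintype.sum_equiv (Equiv.funUnique (Fin 1) _) _ _ fun v => ?_
            simp
        _ ≤ A ^ 2 := hpair c
        _ = A ^ (2 * 0 + 2) := by norm_num
    | succ n ih =>
      intro c
      rw [hsplit n (fun u => α (c - (u 0).1) *
        ((∏ k : Fin (n + 2), α ((u k).1 - (u k).2)) *
          ∏ k : Fin (n + 1), α ((u k.castSucc).2 - (u k.succ).1)))]
      calc ∑ b : ↥(F ×ˢ F), ∑ w : Fin (n + 1) → ↥(F ×ˢ F),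
            α (c - ((Fin.cons (↑b) fun k => ↑(w k) : Fin (n + 2) → ℤ × ℤ) 0).1) *
              ((∏ k : Fin (n + 2), α (((Fin.cons (↑b) fun k => ↑(w k) : Fin (n + 2) → ℤ × ℤ) k).1 -
                  ((Fin.cons (↑b) fun k => ↑(w k) : Fin (n + 2) → ℤ × ℤ) k).2)) *
                ∏ k : Fin (n + 1), α (((Fin.cons (↑b) fun k => ↑(w k) : Fin (n + 2) → ℤ × ℤ) k.castSucc).2 -
                  ((Fin.cons (↑b) fun k => ↑(w k) : Fin (n + 2) → ℤ × ℤ) k.succ).1))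
          = ∑ b : ↥(F ×ˢ F), (α (c - (b : ℤ × ℤ).1) * α ((b : ℤ × ℤ).1 - (b : ℤ × ℤ).2)) *
              ∑ w : Fin (n + 1) → ↥(F ×ˢ F),
                α ((b : ℤ × ℤ).2 - ((w 0 : ℤ × ℤ)).1) *
                  ((∏ k : Fin (n + 1), α ((w k : ℤ × ℤ).1 - (w k : ℤ × ℤ).2)) *
                    ∏ k : Fin n, α ((w k.castSucc : ℤ × ℤ).2 - (w k.succ : ℤ × ℤ).1)) := by
            refine Finset.sum_congr rfl fun b _ => ?_
            rw [Finset.mul_sum]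
            refine Finset.sum_congr rfl fun w _ => ?_
            rw [Fin.cons_zero, hconsterm n b w]
            ring
        _ ≤ ∑ b : ↥(F ×ˢ F), (α (c - (b : ℤ × ℤ).1) * α ((b : ℤ × ℤ).1 - (b : ℤ × ℤ).2)) *
              A ^ (2 * n + 2) := by
            refine Finset.sum_le_sum fun b _ => ?_
            exact mul_le_mul_of_nonneg_left (ih (b : ℤ × ℤ).2)
              (mul_nonneg (hα _) (hα _))
        _ = (∑ b : ↥(F ×ˢ F), α (c - (b : ℤ × ℤ).1) * α ((b : ℤ × ℤ).1 - (b : ℤ × ℤ).2)) *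
              A ^ (2 * n + 2) := by rw [Finset.sum_mul]
        _ ≤ A ^ 2 * A ^ (2 * n + 2) :=
            mul_le_mul_of_nonneg_right (hpair c) (pow_nonneg hA0 _)
        _ = A ^ (2 * (n + 1) + 2) := by ring
  have hfull : ∀ n : ℕ,
      ∑ v : Fin (n + 1) → ↥(F ×ˢ F),
        ((∏ k : Fin (n + 1), α ((v k : ℤ × ℤ).1 - (v k : ℤ × ℤ).2)) *
          ∏ k : Fin n, α ((v k.castSucc : ℤ × ℤ).2 - (v k.succ : ℤ × ℤ).1))
        ≤ M * A ^ (2 * n + 1) := by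
    intro n
    match n with
    | 0 =>
      calc ∑ v : Fin 1 → ↥(F ×ˢ F),
            ((∏ k : Fin 1, α ((v k : ℤ × ℤ).1 - (v k : ℤ × ℤ).2)) *
              ∏ k : Fin 0, α ((v k.castSucc : ℤ × ℤ).2 - (v k.succ : ℤ × ℤ).1))
          = ∑ b : ↥(F ×ˢ F), α ((b : ℤ × ℤ).1 - (b : ℤ × ℤ).2) := by
            refine Fintype.sum_equiv (Equiv.funUnique (Fin 1) _) _ _ fun v => ?_
            simp
        _ ≤ M * A := hb0
        _ = M * A ^ (2 * 0 + 1) := by norm_num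
    | n + 1 =>
      rw [hsplit n (fun u =>
        (∏ k : Fin (n + 2), α ((u k).1 - (u k).2)) *
          ∏ k : Fin (n + 1), α ((u k.castSucc).2 - (u k.succ).1))]
      calc ∑ b : ↥(F ×ˢ F), ∑ w : Fin (n + 1) → ↥(F ×ˢ F),
            ((∏ k : Fin (n + 2), α (((Fin.cons (↑b) fun k => ↑(w k) : Fin (n + 2) → ℤ × ℤ) k).1 -
                ((Fin.cons (↑b) fun k => ↑(w k) : Fin (n + 2) → ℤ × ℤ) k).2)) *
              ∏ k : Fin (n + 1), α (((Fin.cons (↑b) fun k => ↑(w k) : Fin (n + 2) → ℤ × ℤ) k.castSucc).2 -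
                ((Fin.cons (↑b) fun k => ↑(w k) : Fin (n + 2) → ℤ × ℤ) k.succ).1))
          = ∑ b : ↥(F ×ˢ F), α ((b : ℤ × ℤ).1 - (b : ℤ × ℤ).2) *
              ∑ w : Fin (n + 1) → ↥(F ×ˢ F),
                α ((b : ℤ × ℤ).2 - ((w 0 : ℤ × ℤ)).1) *
                  ((∏ k : Fin (n + 1), α ((w k : ℤ × ℤ).1 - (w k : ℤ × ℤ).2)) *
                    ∏ k : Fin n, α ((w k.castSucc : ℤ × ℤ).2 - (w k.succ : ℤ × ℤ).1)) := by
            refine Finset.sum_congr rfl fun b _ => ?_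
            rw [Finset.mul_sum]
            exact Finset.sum_congr rfl fun w _ => hconsterm n b w
        _ ≤ ∑ b : ↥(F ×ˢ F), α ((b : ℤ × ℤ).1 - (b : ℤ × ℤ).2) * A ^ (2 * n + 2) := by
            refine Finset.sum_le_sum fun b _ => ?_
            exact mul_le_mul_of_nonneg_left (hchain n (b : ℤ × ℤ).2) (hα _)
        _ = (∑ b : ↥(F ×ˢ F), α ((b : ℤ × ℤ).1 - (b : ℤ × ℤ).2)) * A ^ (2 * n + 2) := by
            rw [Finset.sum_mul]
        _ ≤ (M * A) * A ^ (2 * n + 2) :=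
            mul_le_mul_of_nonneg_right hb0 (pow_nonneg hA0 _)
        _ = M * A ^ (2 * (n + 1) + 1) := by ring
  -- the power estimate
  have hBpow : ∀ m : ℕ, ‖B ^ (m + 1)‖ ≤ M * α 0 * A ^ (2 * m + 1) := by
    intro m
    rw [hBsum, cotlar_sum_pow]
    calc ‖∑ v : Fin (m + 1) → ↥(F ×ˢ F), (List.ofFn fun k => C ↑(v k)).prod‖
        ≤ ∑ v : Fin (m + 1) → ↥(F ×ˢ F), ‖(List.ofFn fun k => C ↑(v k)).prod‖ :=
          norm_sum_le _ _
      _ ≤ ∑ v : Fin (m + 1) → ↥(F ×ˢ F),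
            α 0 * ((∏ k : Fin (m + 1), α ((v k : ℤ × ℤ).1 - (v k : ℤ × ℤ).2)) *
              ∏ k : Fin m, α ((v k.castSucc : ℤ × ℤ).2 - (v k.succ : ℤ × ℤ).1)) :=
          Finset.sum_le_sum fun v _ => hword m fun k => ↑(v k)
      _ = α 0 * ∑ v : Fin (m + 1) → ↥(F ×ˢ F),
            ((∏ k : Fin (m + 1), α ((v k : ℤ × ℤ).1 - (v k : ℤ × ℤ).2)) *
              ∏ k : Fin m, α ((v k.castSucc : ℤ × ℤ).2 - (v k.succ : ℤ × ℤ).1)) := by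
          rw [Finset.mul_sum]
      _ ≤ α 0 * (M * A ^ (2 * m + 1)) := mul_le_mul_of_nonneg_left (hfull m) (hα 0)
      _ = M * α 0 * A ^ (2 * m + 1) := by ring
  -- conclude
  have hS3 : ∀ n : ℕ, ‖S‖ ^ (2 * 2 ^ n) ≤ M * A ^ (2 * 2 ^ n) := by
    intro n
    have h1 : (1 : ℕ) ≤ 2 ^ n := Nat.one_le_two_pow
    have he : 2 ^ n = (2 ^ n - 1) + 1 := by omega
    have h2 : ‖S‖ ^ (2 * 2 ^ n) = ‖B ^ 2 ^ n‖ := by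
      rw [hnormpow, ← hSB, ← sq, ← pow_mul]
    have h3 : ‖B ^ 2 ^ n‖ ≤ M * α 0 * A ^ (2 * (2 ^ n - 1) + 1) := by
      rw [he]
      exact hBpow (2 ^ n - 1)
    have h4 : M * α 0 * A ^ (2 * (2 ^ n - 1) + 1) ≤ M * A ^ (2 * 2 ^ n) := by
      have he2 : 2 * 2 ^ n = (2 * (2 ^ n - 1) + 1) + 1 := by omega
      calc M * α 0 * A ^ (2 * (2 ^ n - 1) + 1)
          ≤ M * A * A ^ (2 * (2 ^ n - 1) + 1) :=
            mul_le_mul_of_nonneg_right (mul_le_mul_of_nonneg_left (hαA 0) hM0)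
              (pow_nonneg hA0 _)
        _ = M * A ^ ((2 * (2 ^ n - 1) + 1) + 1) := by rw [pow_succ]; ring
        _ = M * A ^ (2 * 2 ^ n) := by rw [← he2]
    rw [h2]
    exact h3.trans h4
  by_contra hcon
  push_neg at hcon
  have hSpos : 0 < ‖S‖ := lt_of_le_of_lt hA0 hcon
  rcases eq_or_lt_of_le hA0 with hAz | hApos
  · have := hS3 0
    rw [← hAz] at this
    simp at this
    simp [this] at hSpos
  · set c : ℝ := ‖S‖ / A with hc
    have hc1 : 1 < c := (one_lt_div hApos).mpr hcon
    have hcM : ∀ n : ℕ, c ^ (2 * 2 ^ n) ≤ M := by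
      intro n
      rw [hc, div_pow, div_le_iff₀ (pow_pos hApos _)]
      exact hS3 n
    obtain ⟨k, hk⟩ := pow_unbounded_of_one_lt M hc1
    have hle : c ^ k ≤ c ^ (2 * 2 ^ k) := by
      apply pow_le_pow_right₀ hc1.le
      have := Nat.lt_two_pow_self (n := k)
      omega
    linarith [hcM k]

end
end

section
/- (Localization estimate, Hilbert-space-valued form.) Let k be a kernel satisfying the size condition with constant C, and let T be a Calderón–Zygmund operator associated with k satisfying ‖Tf‖_{L²(ℝⁿ;H)} ≤ ‖f‖_{L²(ℝⁿ)} for all f ∈ L²(ℝⁿ). Then there is a constant c depending only on n and C such that: for every x₀ ∈ ℝⁿ and every r₁, r₂ ∈ (0,∞) with r₂ > 2r₁, and every pair of bounded measurable scalar functions f and g supported respectively in the balls B_{r₁}(x₀) and B_{r₂}(x₀) (balls for the ℓ∞ distance), one has ‖∫_{ℝⁿ} Tf(x) g(x) dx‖_H ≤ c · r₁ⁿ · log(r₂/r₁) · ‖f‖_∞ ‖g‖_∞. -/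
open MeasureTheory Set Metric Filter
open scoped ENNReal NNReal Topology

noncomputable section

/-- The dyadic cube of generation `k` (side length `2 ^ (-k)`) containing `x`,
in `ℝⁿ` modelled as `Fin n → ℝ` with the `ℓ∞` (sup) metric. -/
def dyadicCube {n : ℕ} (k : ℤ) (x : Fin n → ℝ) : Set (Fin n → ℝ) :=
  {y | ∀ i, ⌊(2 : ℝ) ^ k * y i⌋ = ⌊(2 : ℝ) ^ k * x i⌋}

/-- Center of the dyadic cube of generation `k` containing `x`. -/
def cubeCenter {n : ℕ} (k : ℤ) (x : Fin n → ℝ) : Fin n → ℝ :=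
  fun i => (2 : ℝ) ^ (-k) * ((⌊(2 : ℝ) ^ k * x i⌋ : ℝ) + 1 / 2)

/-- Dyadic averaging (conditional expectation) operator `E_k`. -/
def Ek {n : ℕ} {E : Type*} [NormedAddCommGroup E] [NormedSpace ℝ E]
    (k : ℤ) (g : (Fin n → ℝ) → E) (x : Fin n → ℝ) : E :=
  ⨍ y in dyadicCube k x, g y

/-- Dyadic martingale difference operator `Δ_j = E_j - E_(j-1)`. -/
def deltaK {n : ℕ} {E : Type*} [NormedAddCommGroup E] [NormedSpace ℝ E]
    (j : ℤ) (g : (Fin n → ℝ) → E) (x : Fin n → ℝ) : E :=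
  Ek j g x - Ek (j - 1) g x

/-- Size condition for an `H`-valued kernel. -/
def SizeCondition {n : ℕ} {H : Type*} [NormedAddCommGroup H]
    (C : ℝ) (K : (Fin n → ℝ) → (Fin n → ℝ) → H) : Prop :=
  ∀ x y, x ≠ y → ‖K x y‖ ≤ C / dist x y ^ n

/-- Smoothness (Lipschitz) condition with parameter `γ` for an `H`-valued kernel. -/
def SmoothCondition {n : ℕ} {H : Type*} [NormedAddCommGroup H]
    (C γ : ℝ) (K : (Fin n → ℝ) → (Fin n → ℝ) → H) : Prop :=
  (∀ x x' y, x ≠ y → dist x x' ≤ dist x y / 2 →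
      ‖K x y - K x' y‖ ≤ C * dist x x' ^ γ / dist x y ^ ((n : ℝ) + γ)) ∧
  (∀ x y y', x ≠ y → dist y y' ≤ dist x y / 2 →
      ‖K x y - K x y'‖ ≤ C * dist y y' ^ γ / dist x y ^ ((n : ℝ) + γ))

/-- `T` is a Calderón–Zygmund operator associated with the kernel `K`: for every
bounded compactly supported `f` and a.e. `x` outside the support of `f`,
`T f x = ∫ K x y f y dy`. -/
def IsCZOperator {n : ℕ} {H : Type*} [NormedAddCommGroup H] [InnerProductSpace ℂ H]
    [CompleteSpace H] (K : (Fin n → ℝ) → (Fin n → ℝ) → H)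
    (T : Lp ℂ 2 (volume : Measure (Fin n → ℝ)) →L[ℂ] Lp H 2 (volume : Measure (Fin n → ℝ))) :
    Prop :=
  ∀ (f : (Fin n → ℝ) → ℂ) (hf : MemLp f 2 volume) (M : ℝ),
    (∀ x, ‖f x‖ ≤ M) → HasCompactSupport f →
    ∀ᵐ x ∂(volume : Measure (Fin n → ℝ)),
      x ∉ tsupport f → T (hf.toLp f) x = ∫ y, f y • K x y

/-- The cancellation condition `T*1 = 0`. -/
def HasCancellation {n : ℕ} {H : Type*} [NormedAddCommGroup H] [InnerProductSpace ℂ H]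
    [CompleteSpace H]
    (T : Lp ℂ 2 (volume : Measure (Fin n → ℝ)) →L[ℂ] Lp H 2 (volume : Measure (Fin n → ℝ))) :
    Prop :=
  ∀ (f : (Fin n → ℝ) → ℂ) (hf : MemLp f 2 volume) (M : ℝ),
    (∀ x, ‖f x‖ ≤ M) → HasCompactSupport f → (∫ y, f y) = 0 →
    Integrable (fun x => T (hf.toLp f) x) volume ∧ (∫ x, T (hf.toLp f) x) = 0

open scoped Classical

/-- The element of `L²` determined by a square integrable function (junk value `0`
otherwise). -/

def toL2 {n : ℕ} {E : Type*} [NormedAddCommGroup E] (g : (Fin n → ℝ) → E) :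
    Lp E 2 (volume : Measure (Fin n → ℝ)) :=
  if h : MemLp g 2 volume then h.toLp g else 0



section AuxLemmas

variable {n : ℕ}


-- helper: measurability of 1/dist^n
lemma aux_meas (x₀ : Fin n → ℝ) :
    Measurable (fun x : Fin n → ℝ => 1 / dist x x₀ ^ n) := by
  simpa [one_div] using (((measurable_id (α := Fin n → ℝ)).dist (measurable_const (a := x₀))).pow_const n)

lemma aux_vol (x₀ : Fin n → ℝ) {r : ℝ} (hr : 0 ≤ r) :
    volume (closedBall x₀ r) = ENNReal.ofReal ((2*r)^n) := by
  simpa using Real.volume_pi_closedBall x₀ hr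

lemma aux_vol_lt_top (x₀ : Fin n → ℝ) (r : ℝ) :
    volume (closedBall x₀ r) < ∞ := by
  rcases le_or_gt 0 r with h | h
  · rw [aux_vol x₀ h]; exact ENNReal.ofReal_lt_top
  · simp [Metric.closedBall_eq_empty.2 h]

-- integrability of 1/dist^n on annuli
lemma aux_intOn (x₀ : Fin n → ℝ) {s : ℝ} (hs : 0 < s) (R : ℝ) :
    IntegrableOn (fun x : Fin n → ℝ => 1 / dist x x₀ ^ n)
      (closedBall x₀ R \ closedBall x₀ s) volume := by
  have hmeas : MeasurableSet (closedBall x₀ R \ closedBall x₀ s) :=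
    measurableSet_closedBall.diff measurableSet_closedBall
  apply Measure.integrableOn_of_bounded
    (M := 1 / s ^ n)
  · exact ne_of_lt (lt_of_le_of_lt (measure_mono diff_subset) (aux_vol_lt_top x₀ R))
  · exact (aux_meas x₀).aestronglyMeasurable
  · rw [ae_restrict_iff' hmeas]
    refine Eventually.of_forall fun x hx => ?_
    have hd : s < dist x x₀ := by
      have := hx.2
      simp only [mem_closedBall] at this
      linarith [not_le.mp (fun h => this h)]
    have h1 : s ^ n ≤ dist x x₀ ^ n := pow_le_pow_left₀ hs.le hd.le n
    have h2 : (0:ℝ) < s ^ n := pow_pos hs n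
    rw [Real.norm_eq_abs, abs_of_nonneg (by positivity)]
    exact one_div_le_one_div_of_le h2 h1

lemma aux_annulus (x₀ : Fin n → ℝ) {s : ℝ} (hs : 0 < s) (N : ℕ) :
    ∫ x in closedBall x₀ (2^N * s) \ closedBall x₀ s, 1 / dist x x₀ ^ n
      ≤ (N : ℝ) * 4 ^ n := by
  induction N with
  | zero => simp
  | succ N ih =>
      set ψ := fun x : Fin n → ℝ => 1 / dist x x₀ ^ n with hψ
      have hsub1 : (s : ℝ) ≤ 2 ^ N * s := le_mul_of_one_le_left hs.le (one_le_pow₀ one_le_two)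
      have hsub2 : (2:ℝ) ^ N * s ≤ 2 ^ (N+1) * s := by
        have : (2:ℝ)^N ≤ 2^(N+1) := pow_le_pow_right₀ one_le_two (Nat.le_succ N)
        nlinarith
      have hset : closedBall x₀ (2^(N+1) * s) \ closedBall x₀ s
          = (closedBall x₀ (2^N * s) \ closedBall x₀ s)
            ∪ (closedBall x₀ (2^(N+1) * s) \ closedBall x₀ (2^N * s)) := by
        rw [union_comm]
        rw [Set.diff_union_diff_cancel (closedBall_subset_closedBall hsub2)
          (closedBall_subset_closedBall hsub1)]
      have hdisj : Disjoint (closedBall x₀ (2^N * s) \ closedBall x₀ s)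
          (closedBall x₀ (2^(N+1) * s) \ closedBall x₀ (2^N * s)) :=
        Set.disjoint_of_subset diff_subset (diff_subset_compl _ _) disjoint_compl_right
      have hmeas2 : MeasurableSet (closedBall x₀ (2^(N+1) * s) \ closedBall x₀ (2^N * s)) :=
        measurableSet_closedBall.diff measurableSet_closedBall
      rw [hset, setIntegral_union hdisj hmeas2 (aux_intOn x₀ hs _)
        (aux_intOn x₀ (by positivity) _)]
      have hann : ∫ x in closedBall x₀ (2^(N+1) * s) \ closedBall x₀ (2^N * s), ψ x ≤ 4 ^ n := by
        have hb : ∀ x ∈ closedBall x₀ (2^(N+1) * s) \ closedBall x₀ (2^N * s),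
            ‖ψ x‖ ≤ 1 / (2^N * s) ^ n := by
          intro x hx
          have hd : 2 ^ N * s < dist x x₀ := by
            have := hx.2; simp only [mem_closedBall, not_le] at this; exact this
          have hpos : (0:ℝ) < 2 ^ N * s := by positivity
          rw [Real.norm_eq_abs, abs_of_nonneg (by positivity)]
          exact one_div_le_one_div_of_le (pow_pos hpos n) (pow_le_pow_left₀ hpos.le hd.le n)
        have := norm_setIntegral_le_of_norm_le_const
          (lt_of_le_of_lt (measure_mono diff_subset) (aux_vol_lt_top x₀ _)) hb
        have hle := le_trans (le_abs_self _) ((Real.norm_eq_abs _ ▸ this))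
        refine hle.trans ?_
        have hvol : (volume (closedBall x₀ (2^(N+1) * s) \ closedBall x₀ (2^N * s))).toReal
            ≤ (2 * (2^(N+1) * s)) ^ n := by
          have h1 : volume (closedBall x₀ (2^(N+1) * s) \ closedBall x₀ (2^N * s))
              ≤ ENNReal.ofReal ((2 * (2^(N+1) * s)) ^ n) := by
            rw [← aux_vol x₀ (by positivity)]
            exact measure_mono diff_subset
          exact ENNReal.toReal_le_of_le_ofReal (by positivity) h1
        have hpos : (0:ℝ) < (2 ^ N * s) ^ n := by positivity
        calc 1 / (2^N * s) ^ n *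
              (volume (closedBall x₀ (2^(N+1) * s) \ closedBall x₀ (2^N * s))).toReal
            ≤ 1 / (2^N * s) ^ n * (2 * (2^(N+1) * s)) ^ n := by
              apply mul_le_mul_of_nonneg_left hvol (by positivity)
          _ = ((2 * (2^(N+1) * s)) / (2^N * s)) ^ n := by
              rw [div_pow]; ring
          _ = 4 ^ n := by
              congr 1
              field_simp
              ring
        done
      have := add_le_add ih hann
      refine le_trans this ?_
      push_cast
      ring_nf
      linarith


variable {H : Type} [NormedAddCommGroup H] [InnerProductSpace ℂ H] [CompleteSpace H]

-- L¹ norm on a finite-measure set ≤ √vol * L² norm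
lemma aux_l1 (u : Lp H 2 (volume : Measure (Fin n → ℝ))) (s : Set (Fin n → ℝ))
    (hvol : volume s ≠ ∞) :
    ∫ x in s, ‖u x‖ ≤ ‖u‖ * ((volume s).toReal) ^ ((1:ℝ)/2) := by
  have hmeas : AEStronglyMeasurable (fun x => (u : (Fin n → ℝ) → H) x)
      ((volume : Measure (Fin n → ℝ)).restrict s) :=
    (Lp.aestronglyMeasurable u).restrict
  have h1 : ∫ x in s, ‖u x‖ = (eLpNorm (fun x => (u : (Fin n → ℝ) → H) x) 1
      ((volume : Measure (Fin n → ℝ)).restrict s)).toReal := by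
    rw [integral_norm_eq_lintegral_enorm hmeas, eLpNorm_one_eq_lintegral_enorm]
  have h2 : eLpNorm (fun x => (u : (Fin n → ℝ) → H) x) 1 (volume.restrict s)
      ≤ eLpNorm (fun x => (u : (Fin n → ℝ) → H) x) 2 (volume.restrict s)
        * (volume.restrict s Set.univ) ^ ((1:ℝ)/(1:ℝ≥0∞).toReal - 1/(2:ℝ≥0∞).toReal) := by
    exact eLpNorm_le_eLpNorm_mul_rpow_measure_univ (by norm_num) hmeas
  have h3 : eLpNorm (fun x => (u : (Fin n → ℝ) → H) x) 2 (volume.restrict s)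
      ≤ eLpNorm (fun x => (u : (Fin n → ℝ) → H) x) 2 volume :=
    eLpNorm_mono_measure _ Measure.restrict_le_self
  have h4 : eLpNorm (fun x => (u : (Fin n → ℝ) → H) x) 2 volume ≠ ∞ := Lp.eLpNorm_ne_top u
  rw [h1]
  have hexp : (1:ℝ)/(1:ℝ≥0∞).toReal - 1/(2:ℝ≥0∞).toReal = (1:ℝ)/2 := by norm_num
  rw [hexp, Measure.restrict_apply_univ] at h2
  have h5 : eLpNorm (fun x => (u : (Fin n → ℝ) → H) x) 1 (volume.restrict s)
      ≤ eLpNorm (fun x => (u : (Fin n → ℝ) → H) x) 2 volume * (volume s) ^ ((1:ℝ)/2) :=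
    h2.trans (mul_le_mul_left h3 _)
  have hfin : eLpNorm (fun x => (u : (Fin n → ℝ) → H) x) 2 volume * (volume s) ^ ((1:ℝ)/2) ≠ ∞ :=
    ENNReal.mul_ne_top h4 (by
      exact ENNReal.rpow_ne_top_of_nonneg (by norm_num) hvol)
  calc (eLpNorm (fun x => (u : (Fin n → ℝ) → H) x) 1 (volume.restrict s)).toReal
      ≤ (eLpNorm (fun x => (u : (Fin n → ℝ) → H) x) 2 volume * (volume s) ^ ((1:ℝ)/2)).toReal :=
        ENNReal.toReal_mono hfin h5
    _ = ‖u‖ * ((volume s).toReal) ^ ((1:ℝ)/2) := by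
        rw [ENNReal.toReal_mul, ← ENNReal.toReal_rpow, Lp.norm_def]

-- L² norm of a bounded function supported in a set
lemma aux_l2bound {f : (Fin n → ℝ) → ℂ} {M : ℝ} {s : Set (Fin n → ℝ)}
    (hs : MeasurableSet s) (hvol : volume s ≠ ∞)
    (hb : ∀ x, ‖f x‖ ≤ M) (hsupp : Function.support f ⊆ s) :
    (eLpNorm f 2 (volume : Measure (Fin n → ℝ))).toReal
      ≤ M * ((volume s).toReal) ^ ((1:ℝ)/2) := by
  have hM : 0 ≤ M := le_trans (norm_nonneg _) (hb 0)
  have h1 : ∀ x, ‖f x‖ ≤ ‖s.indicator (fun _ => (M:ℝ)) x‖ := by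
    intro x
    by_cases hx : x ∈ s
    · rw [Set.indicator_of_mem hx, Real.norm_eq_abs, abs_of_nonneg hM]; exact hb x
    · have : f x = 0 := Function.notMem_support.mp (fun h => hx (hsupp h))
      simp [this, Set.indicator_of_notMem hx]
  have h2 := eLpNorm_mono h1 (p := 2) (μ := (volume : Measure (Fin n → ℝ)))
  rw [eLpNorm_indicator_const hs two_ne_zero ENNReal.ofNat_ne_top] at h2
  have h3 : (‖(M:ℝ)‖₊ : ℝ≥0∞) * volume s ^ (1/(2:ℝ≥0∞).toReal) ≠ ∞ :=
    ENNReal.mul_ne_top ENNReal.coe_ne_top (ENNReal.rpow_ne_top_of_nonneg (by norm_num) hvol)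
  calc (eLpNorm f 2 volume).toReal
      ≤ ((‖(M:ℝ)‖₊ : ℝ≥0∞) * volume s ^ (1/(2:ℝ≥0∞).toReal)).toReal := ENNReal.toReal_mono h3 h2
    _ = M * ((volume s).toReal) ^ ((1:ℝ)/2) := by
        rw [ENNReal.toReal_mul, ← ENNReal.toReal_rpow]
        have he : (1/(2:ℝ≥0∞).toReal) = (1:ℝ)/2 := by norm_num
        rw [he]
        congr 1
        simp [abs_of_nonneg hM]

end AuxLemmas

set_option maxHeartbeats 1000000 in
/-- **Localization estimate** (Hilbert-space-valued form). If `T` is an `L²`-normalized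
Calderón–Zygmund operator whose kernel satisfies the size condition with constant `C`,
then for `r₂ > 2 r₁` and bounded measurable `f`, `g` supported in the (ℓ∞) balls
`B(x₀, r₁)` and `B(x₀, r₂)`, one has
`‖∫ Tf(x) g(x) dx‖ ≤ c · r₁ⁿ · log(r₂/r₁) · ‖f‖_∞ ‖g‖_∞`, with `c = c(n, C)`. -/
theorem localization_estimate (n : ℕ) (hn : 0 < n) (C : ℝ) :
    ∃ c : ℝ, 0 < c ∧
      ∀ (H : Type) [NormedAddCommGroup H] [InnerProductSpace ℂ H] [CompleteSpace H]
        (K : (Fin n → ℝ) → (Fin n → ℝ) → H)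
        (T : Lp ℂ 2 (volume : Measure (Fin n → ℝ)) →L[ℂ]
          Lp H 2 (volume : Measure (Fin n → ℝ))),
        SizeCondition C K → IsCZOperator K T → (∀ g, ‖T g‖ ≤ ‖g‖) →
        ∀ (x₀ : Fin n → ℝ) (r₁ r₂ : ℝ), 0 < r₁ → 2 * r₁ < r₂ →
        ∀ (f g : (Fin n → ℝ) → ℂ) (hf : MemLp f 2 (volume : Measure (Fin n → ℝ)))
          (Mf Mg : ℝ),
          Measurable g →
          (∀ x, ‖f x‖ ≤ Mf) → (∀ x, ‖g x‖ ≤ Mg) →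
          Function.support f ⊆ closedBall x₀ r₁ →
          Function.support g ⊆ closedBall x₀ r₂ →
          ‖∫ x, g x • T (hf.toLp f) x‖ ≤ c * r₁ ^ n * Real.log (r₂ / r₁) * Mf * Mg := by
  set C' := max C 0 with hC'def
  have hC' : 0 ≤ C' := le_max_right _ _
  refine ⟨(3^n + 2*C'*16^n + 1)/Real.log 2, by positivity, ?_⟩
  intro H _ _ _ K T hK hCZ hTnorm x₀ r₁ r₂ hr₁ hr₂ f g hf Mf Mg hgmeas hfb hgb hfsupp hgsupp
  classical
  have hMf : 0 ≤ Mf := le_trans (norm_nonneg _) (hfb x₀)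
  have hMg : 0 ≤ Mg := le_trans (norm_nonneg _) (hgb x₀)
  have h2r₁ : (0:ℝ) < 2 * r₁ := by linarith
  have hr₂pos : (0:ℝ) < r₂ := by linarith
  have hK' : ∀ x y : Fin n → ℝ, x ≠ y → ‖K x y‖ ≤ C' / dist x y ^ n := by
    intro x y hxy
    refine (hK x y hxy).trans ?_
    have hd : (0:ℝ) < dist x y := dist_pos.mpr hxy
    have hdn : (0:ℝ) < dist x y ^ n := pow_pos hd n
    gcongr
    exact le_max_left _ _
  set u := T (hf.toLp f) with hu
  -- compact support and kernel representation
  have htsupp : tsupport f ⊆ closedBall x₀ r₁ :=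
    closure_minimal hfsupp isClosed_closedBall
  have hcs : HasCompactSupport f :=
    IsCompact.of_isClosed_subset (isCompact_closedBall x₀ r₁) (isClosed_tsupport f) htsupp
  have hrep := hCZ f hf Mf hfb hcs
  set B₁ := closedBall x₀ r₁ with hB₁
  set B₂ := closedBall x₀ (2*r₁) with hB₂
  set D := Mf * C' * 2^n * (2*r₁)^n with hD
  have hDpos : 0 ≤ D := by positivity
  -- pointwise kernel bound
  have key : ∀ x : Fin n → ℝ, 2*r₁ < dist x x₀ → ‖∫ y, f y • K x y‖ ≤ D / dist x x₀ ^ n := by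
    intro x hx
    have hd : (0:ℝ) < dist x x₀ := lt_trans h2r₁ hx
    have hdn : (0:ℝ) < dist x x₀ ^ n := pow_pos hd n
    calc ‖∫ y, f y • K x y‖ ≤ ∫ y, ‖f y • K x y‖ := norm_integral_le_integral_norm _
      _ ≤ ∫ y, B₁.indicator (fun _ => Mf * (C' * 2^n / dist x x₀ ^ n)) y := by
          refine integral_mono_of_nonneg (Eventually.of_forall fun y => norm_nonneg _)
            ((integrable_indicator_iff measurableSet_closedBall).2
              (integrableOn_const (aux_vol_lt_top x₀ r₁).ne)) ?_
          refine Eventually.of_forall fun y => ?_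
          by_cases hy : y ∈ B₁
          · rw [Set.indicator_of_mem hy]
            refine le_trans (le_of_eq (norm_smul (f y) (K x y))) ?_
            have hyr : dist y x₀ ≤ r₁ := mem_closedBall.1 hy
            have hxy : dist x x₀ / 2 ≤ dist x y := by
              have := dist_triangle x y x₀
              linarith
            have hxypos : (0:ℝ) < dist x y := by linarith
            have hKb : ‖K x y‖ ≤ C' * 2^n / dist x x₀ ^ n := by
              refine (hK' x y (dist_pos.mp hxypos)).trans ?_
              have h1 : (dist x x₀ / 2) ^ n ≤ dist x y ^ n :=
                pow_le_pow_left₀ (by positivity) hxy n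
              have h2 : C' / dist x y ^ n ≤ C' / (dist x x₀ / 2) ^ n := by
                gcongr
              refine h2.trans ?_
              rw [div_pow, div_div_eq_mul_div]
            exact mul_le_mul (hfb y) hKb (norm_nonneg _) hMf
          · have hfy : f y = 0 := Function.notMem_support.mp (fun h => hy (hfsupp h))
            simp [hfy, Set.indicator_of_notMem hy]
      _ = (volume B₁).toReal • (Mf * (C' * 2^n / dist x x₀ ^ n)) :=
          integral_indicator_const _ measurableSet_closedBall
      _ = D / dist x x₀ ^ n := by
          rw [hB₁, aux_vol x₀ hr₁.le, ENNReal.toReal_ofReal (by positivity), smul_eq_mul, hD]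
          ring
  -- split g
  set g₁ := B₂.indicator g with hg₁
  set g₂ := B₂ᶜ.indicator g with hg₂
  have hg₁meas : Measurable g₁ := hgmeas.indicator measurableSet_closedBall
  have hg₂meas : Measurable g₂ := hgmeas.indicator measurableSet_closedBall.compl
  set A := closedBall x₀ r₂ \ B₂ with hA
  have hAmeas : MeasurableSet A := measurableSet_closedBall.diff measurableSet_closedBall
  set φ := A.indicator (fun x => (Mg * D) * (1 / dist x x₀ ^ n)) with hφ
  have hφ_nonneg : ∀ x, 0 ≤ φ x := by
    intro x
    apply Set.indicator_nonneg
    intro y _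
    positivity
  have hφ_int : Integrable φ volume := by
    rw [hφ, integrable_indicator_iff hAmeas]
    exact (aux_intOn x₀ h2r₁ r₂).const_mul (Mg * D)
  have hbound2 : ∀ᵐ x ∂(volume : Measure (Fin n → ℝ)), ‖g₂ x • u x‖ ≤ φ x := by
    filter_upwards [hrep] with x hx
    by_cases hxB : x ∈ B₂
    · have : g₂ x = 0 := Set.indicator_of_notMem (by simpa using hxB) g
      simp [this, hφ_nonneg x]
    · have hd2 : 2*r₁ < dist x x₀ := by
        have := hxB; rw [hB₂, mem_closedBall, not_le] at this; exact this
      have hnot : x ∉ tsupport f := by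
        intro hmem
        have := htsupp hmem
        rw [hB₁, mem_closedBall] at this
        linarith
      by_cases hxr₂ : x ∈ closedBall x₀ r₂
      · have hxA : x ∈ A := ⟨hxr₂, hxB⟩
        rw [hφ, Set.indicator_of_mem hxA]
        refine le_trans (le_of_eq (norm_smul (g₂ x) (u x))) ?_
        have hgle : ‖g₂ x‖ ≤ Mg := by
          rw [hg₂]
          by_cases hc : x ∈ B₂ᶜ
          · rw [Set.indicator_of_mem hc]; exact hgb x
          · rw [Set.indicator_of_notMem hc]; simpa using hMg
        have hTb : ‖u x‖ ≤ D / dist x x₀ ^ n := by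
          rw [hx hnot]
          exact key x hd2
        calc ‖g₂ x‖ * ‖u x‖ ≤ Mg * (D / dist x x₀ ^ n) :=
              mul_le_mul hgle hTb (norm_nonneg _) hMg
          _ = Mg * D * (1 / dist x x₀ ^ n) := by ring
      · have hgx : g x = 0 := Function.notMem_support.mp (fun h => hxr₂ (hgsupp h))
        have : g₂ x = 0 := by
          rw [hg₂, Set.indicator_apply]
          split <;> simp [hgx]
        simp [this, hφ_nonneg x]
  have haesm2 : AEStronglyMeasurable (fun x => g₂ x • u x) volume :=
    hg₂meas.aestronglyMeasurable.smul (Lp.aestronglyMeasurable u)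
  have h₂int : Integrable (fun x => g₂ x • u x) volume :=
    hφ_int.mono' haesm2 hbound2
  -- choice of N
  set L := Real.log (r₂ / r₁) with hL
  have hlog2 : (0:ℝ) < Real.log 2 := Real.log_pos one_lt_two
  have hrdiv : (2:ℝ) < r₂ / r₁ := by
    rw [lt_div_iff₀ hr₁]; linarith
  have hLlog2 : Real.log 2 ≤ L := Real.log_le_log two_pos hrdiv.le
  have hLpos : 0 < L := lt_of_lt_of_le hlog2 hLlog2
  set N := ⌈Real.logb 2 (r₂ / (2*r₁))⌉₊ with hN
  have hratpos : (0:ℝ) < r₂ / (2*r₁) := by positivity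
  have hrat1 : (1:ℝ) ≤ r₂ / (2*r₁) := by
    rw [le_div_iff₀ h2r₁]; linarith
  have hr₂N : r₂ ≤ 2^N * (2*r₁) := by
    have h1 : Real.logb 2 (r₂/(2*r₁)) ≤ (N:ℝ) := Nat.le_ceil _
    have h2 : r₂/(2*r₁) ≤ (2:ℝ) ^ (N:ℝ) :=
      (Real.logb_le_iff_le_rpow one_lt_two hratpos).1 h1
    rw [Real.rpow_natCast] at h2
    exact (div_le_iff₀ h2r₁).1 h2
  have hNle : (N:ℝ) ≤ 2 * L / Real.log 2 := by
    have h0 : 0 ≤ Real.logb 2 (r₂/(2*r₁)) := Real.logb_nonneg one_lt_two hrat1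
    have h1 : (N:ℝ) < Real.logb 2 (r₂/(2*r₁)) + 1 := Nat.ceil_lt_add_one h0
    have h2 : Real.logb 2 (r₂/(2*r₁)) ≤ L / Real.log 2 := by
      rw [Real.logb]
      gcongr
      apply Real.log_le_log hratpos
      rw [div_le_div_iff₀ h2r₁ hr₁] at *
      nlinarith
    have h3 : (1:ℝ) ≤ L / Real.log 2 := by
      rw [le_div_iff₀ hlog2]; linarith
    have : 2 * L / Real.log 2 = L / Real.log 2 + L / Real.log 2 := by ring
    rw [this]
    linarith
  -- term 2 estimate
  have hT2 : ‖∫ x, g₂ x • u x‖ ≤ Mg * D * ((N:ℝ) * 4^n) := by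
    calc ‖∫ x, g₂ x • u x‖ ≤ ∫ x, ‖g₂ x • u x‖ := norm_integral_le_integral_norm _
      _ ≤ ∫ x, φ x :=
          integral_mono_of_nonneg (Eventually.of_forall fun x => norm_nonneg _) hφ_int hbound2
      _ = ∫ x in A, (Mg * D) * (1 / dist x x₀ ^ n) := by
          rw [hφ, integral_indicator hAmeas]
      _ = (Mg * D) * ∫ x in A, 1 / dist x x₀ ^ n := MeasureTheory.integral_const_mul _ _
      _ ≤ (Mg * D) * ((N:ℝ) * 4^n) := by
          apply mul_le_mul_of_nonneg_left ?_ (by positivity)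
          have hsub : A ⊆ closedBall x₀ (2^N * (2*r₁)) \ closedBall x₀ (2*r₁) :=
            Set.diff_subset_diff_left (closedBall_subset_closedBall hr₂N)
          refine le_trans (setIntegral_mono_set (aux_intOn x₀ h2r₁ _)
            (Eventually.of_forall fun x => by positivity)
            (HasSubset.Subset.eventuallyLE hsub)) ?_
          exact aux_annulus x₀ h2r₁ N
  -- term 1
  set ψ₁ := B₂.indicator (fun x => Mg * ‖u x‖) with hψ₁
  have hOnB₂ : IntegrableOn (fun x => ‖u x‖) B₂ volume := by
    have hm : MemLp (fun x => u x) 2 (volume.restrict B₂) := (Lp.memLp u).restrict B₂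
    haveI : IsFiniteMeasure ((volume : Measure (Fin n → ℝ)).restrict B₂) :=
      ⟨by rw [Measure.restrict_apply_univ]; exact aux_vol_lt_top _ _⟩
    exact (hm.integrable one_le_two).norm
  have hψ₁int : Integrable ψ₁ volume := by
    rw [hψ₁, integrable_indicator_iff measurableSet_closedBall]
    exact hOnB₂.const_mul Mg
  have h₁bound : ∀ x, ‖g₁ x • u x‖ ≤ ψ₁ x := by
    intro x
    rw [hψ₁, hg₁]
    by_cases hx : x ∈ B₂
    · rw [Set.indicator_of_mem hx, Set.indicator_of_mem hx]
      refine le_trans (le_of_eq (norm_smul (g x) (u x))) ?_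
      exact mul_le_mul_of_nonneg_right (hgb x) (norm_nonneg _)
    · rw [Set.indicator_of_notMem hx, Set.indicator_of_notMem hx]
      simp
  have haesm1 : AEStronglyMeasurable (fun x => g₁ x • u x) volume :=
    hg₁meas.aestronglyMeasurable.smul (Lp.aestronglyMeasurable u)
  have h₁int : Integrable (fun x => g₁ x • u x) volume :=
    hψ₁int.mono' haesm1 (Eventually.of_forall h₁bound)
  have hvolB₁ : (volume B₁).toReal = (2*r₁)^n := by
    rw [hB₁, aux_vol x₀ hr₁.le, ENNReal.toReal_ofReal (by positivity)]
  have hvolB₂ : (volume B₂).toReal = (2*(2*r₁))^n := by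
    rw [hB₂, aux_vol x₀ h2r₁.le, ENNReal.toReal_ofReal (by positivity)]
  have hunorm : ‖u‖ ≤ Mf * ((2*r₁)^n) ^ ((1:ℝ)/2) := by
    refine le_trans (hTnorm _) ?_
    rw [Lp.norm_toLp]
    rw [← hvolB₁]
    exact aux_l2bound measurableSet_closedBall (aux_vol_lt_top x₀ r₁).ne hfb hfsupp
  have hT1 : ‖∫ x, g₁ x • u x‖ ≤ Mg * Mf * (3^n * r₁^n) := by
    calc ‖∫ x, g₁ x • u x‖ ≤ ∫ x, ‖g₁ x • u x‖ := norm_integral_le_integral_norm _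
      _ ≤ ∫ x, ψ₁ x :=
          integral_mono_of_nonneg (Eventually.of_forall fun x => norm_nonneg _) hψ₁int
            (Eventually.of_forall h₁bound)
      _ = ∫ x in B₂, Mg * ‖u x‖ := by
          rw [hψ₁, integral_indicator measurableSet_closedBall]
      _ = Mg * ∫ x in B₂, ‖u x‖ := MeasureTheory.integral_const_mul _ _
      _ ≤ Mg * (‖u‖ * ((volume B₂).toReal) ^ ((1:ℝ)/2)) :=
          mul_le_mul_of_nonneg_left (aux_l1 u B₂ (aux_vol_lt_top x₀ _).ne) hMg
      _ ≤ Mg * ((Mf * ((2*r₁)^n) ^ ((1:ℝ)/2)) * ((2*(2*r₁))^n) ^ ((1:ℝ)/2)) := by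
          rw [hvolB₂]
          refine mul_le_mul_of_nonneg_left ?_ hMg
          refine mul_le_mul_of_nonneg_right hunorm (by positivity)
      _ = Mg * Mf * (((2*r₁)^n : ℝ) ^ ((1:ℝ)/2) * ((2*(2*r₁))^n) ^ ((1:ℝ)/2)) := by
          ring
      _ ≤ Mg * Mf * (3^n * r₁^n) := by
          refine mul_le_mul_of_nonneg_left ?_ (by positivity)
          -- ((2r₁)^n)^(1/2) * ((4r₁)^n)^(1/2) ≤ 3^n * r₁^n
          have e1 : ((2*r₁)^n : ℝ) ^ ((1:ℝ)/2) * ((2*(2*r₁))^n) ^ ((1:ℝ)/2)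
              = ((2*r₁)^n * (2*(2*r₁))^n) ^ ((1:ℝ)/2) :=
            (Real.mul_rpow (by positivity) (by positivity)).symm
          rw [e1]
          have e2 : ((2*r₁)^n : ℝ) * (2*(2*r₁))^n = ((3*r₁)^2)^n * (8/9)^n := by
            rw [← mul_pow, ← mul_pow]; congr 1; ring
          have e3 : ((2*r₁)^n : ℝ) * (2*(2*r₁))^n ≤ ((3*r₁)^2)^n := by
            rw [e2]
            have h89 : ((8:ℝ)/9)^n ≤ 1 := pow_le_one₀ (by norm_num) (by norm_num)
            nlinarith [pow_nonneg (by positivity : (0:ℝ) ≤ (3*r₁)^2) n,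
              pow_nonneg (by norm_num : (0:ℝ) ≤ (8:ℝ)/9) n]
          have e4 : (((2*r₁)^n : ℝ) * (2*(2*r₁))^n) ^ ((1:ℝ)/2)
              ≤ (((3*r₁)^2)^n) ^ ((1:ℝ)/2) :=
            Real.rpow_le_rpow (by positivity) e3 (by norm_num)
          refine e4.trans ?_
          rw [← pow_mul]
          rw [← Real.rpow_natCast (3*r₁) (2*n), ← Real.rpow_mul (by positivity)]
          have : ((2*n : ℕ) : ℝ) * ((1:ℝ)/2) = (n : ℝ) := by push_cast; ring
          rw [this, Real.rpow_natCast, mul_pow]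
  -- combine
  have hsplit : ∫ x, g x • u x = (∫ x, g₁ x • u x) + ∫ x, g₂ x • u x := by
    rw [← integral_add h₁int h₂int]
    apply integral_congr_ae
    refine Eventually.of_forall fun x => ?_
    have hgx : g₁ x + g₂ x = g x := by
      rw [hg₁, hg₂, ← Pi.add_apply, Set.indicator_self_add_compl B₂ g]
    calc g x • u x = (g₁ x + g₂ x) • u x := by rw [hgx]
      _ = g₁ x • u x + g₂ x • u x := add_smul _ _ _
  have hmain : ‖∫ x, g x • u x‖ ≤ Mg * Mf * (3^n * r₁^n) + Mg * D * ((N:ℝ) * 4^n) := by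
    rw [hsplit]
    exact le_trans (norm_add_le _ _) (add_le_add hT1 hT2)
  refine hmain.trans ?_
  -- arithmetic conclusion
  set Q := L / Real.log 2 with hQ
  have hQ1 : (1:ℝ) ≤ Q := by
    rw [hQ, le_div_iff₀ hlog2]; linarith
  have hterm2 : Mg * D * ((N:ℝ) * 4^n) ≤ (Mf * Mg * r₁^n) * ((2*C'*16^n) * Q) := by
    have h1 : Mg * D * ((N:ℝ) * 4^n) ≤ Mg * D * ((2 * L / Real.log 2) * 4^n) := by
      refine mul_le_mul_of_nonneg_left ?_ (by positivity)
      exact mul_le_mul_of_nonneg_right hNle (by positivity)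
    refine h1.trans ?_
    apply le_of_eq
    rw [hD, hQ]
    rw [mul_pow 2 r₁ n]
    field_simp
    ring_nf
    have h16 : (2:ℝ)^(n*2) * 4^n = 16^n := by
      rw [pow_mul']; norm_num [← mul_pow]
    linear_combination (Mg*Mf*C') * h16
  have hterm1 : Mg * Mf * (3^n * r₁^n) ≤ (Mf * Mg * r₁^n) * ((3:ℝ)^n * Q) := by
    have : Mg * Mf * (3^n * r₁^n) = (Mf * Mg * r₁^n) * ((3:ℝ)^n * 1) := by ring
    rw [this]
    refine mul_le_mul_of_nonneg_left ?_ (by positivity)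
    exact mul_le_mul_of_nonneg_left hQ1 (by positivity : (0:ℝ) ≤ 3^n)
  have hfinal : (Mf * Mg * r₁^n) * ((3:ℝ)^n * Q) + (Mf * Mg * r₁^n) * ((2*C'*16^n) * Q)
      ≤ (3^n + 2*C'*16^n + 1)/Real.log 2 * r₁ ^ n * L * Mf * Mg := by
    have heq : (3^n + 2*C'*16^n + 1)/Real.log 2 * r₁ ^ n * L * Mf * Mg
        = (Mf * Mg * r₁^n) * (((3:ℝ)^n + 2*C'*16^n + 1) * Q) := by
      rw [hQ]; field_simp
    rw [heq]
    have hcomb : (Mf*Mg*r₁^n) * ((3:ℝ)^n*Q) + (Mf*Mg*r₁^n)*((2*C'*16^n)*Q)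
        = (Mf*Mg*r₁^n) * (((3:ℝ)^n + 2*C'*16^n)*Q) := by ring
    rw [hcomb]
    refine mul_le_mul_of_nonneg_left ?_ (by positivity : (0:ℝ) ≤ Mf*Mg*r₁^n)
    refine mul_le_mul_of_nonneg_right (by linarith) (le_trans zero_le_one hQ1)
  calc Mg * Mf * (3^n * r₁^n) + Mg * D * ((N:ℝ) * 4^n)
      ≤ (Mf * Mg * r₁^n) * ((3:ℝ)^n * Q) + (Mf * Mg * r₁^n) * ((2*C'*16^n) * Q) :=
        add_le_add hterm1 hterm2
    _ ≤ (3^n + 2*C'*16^n + 1)/Real.log 2 * r₁ ^ n * L * Mf * Mg := hfinal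

end
end

section
/- (Commutative case of Theorem B2, L∞ → BMO estimate.) Let k be a kernel satisfying the size condition and the smoothness condition with constant C and Lipschitz parameter γ ∈ (0,1], and let T be a Calderón–Zygmund operator associated with k satisfying ‖Tf‖_{L²(ℝⁿ;H)} ≤ ‖f‖_{L²(ℝⁿ)} for all f ∈ L²(ℝⁿ). Then there is a constant c depending only on n, γ and C such that for every f ∈ L²(ℝⁿ) ∩ L∞(ℝⁿ) and every axis-parallel cube Q ⊂ ℝⁿ, inf_{α∈H} ( |Q|^{−1} ∫_Q ‖Tf(x) − α‖_H² dx )^{1/2} ≤ c · ‖f‖_{L∞(ℝⁿ)}. -/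
open MeasureTheory Set Metric Filter
open scoped ENNReal NNReal Topology

noncomputable section

open scoped Classical

lemma exists_shell {r d : ℝ} (hr : 0 < r) (hd : r < d) :
    ∃ j : ℕ, 2 ^ j * r < d ∧ d ≤ 2 ^ (j + 1) * r := by
  classical
  have h2 : (1:ℝ) < 2 := one_lt_two
  have hex : ∃ j : ℕ, d ≤ 2 ^ (j + 1) * r := by
    obtain ⟨m, hm⟩ := pow_unbounded_of_one_lt (d / r) h2
    refine ⟨m, ?_⟩
    have := (div_le_iff₀ hr).mp (le_of_lt hm)
    calc d ≤ 2 ^ m * r := this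
    _ ≤ 2 ^ (m+1) * r := by
        have : (2:ℝ) ^ m ≤ 2 ^ (m+1) := by
          apply pow_le_pow_right₀ (by norm_num) (by omega)
        nlinarith
  refine ⟨Nat.find hex, ?_, Nat.find_spec hex⟩
  rcases Nat.eq_zero_or_pos (Nat.find hex) with h0 | hpos
  · rw [h0]; simpa using hd
  · have := Nat.find_min hex (Nat.sub_lt hpos one_pos)
    push_neg at this
    have heq : Nat.find hex - 1 + 1 = Nat.find hex := Nat.succ_pred_eq_of_pos hpos
    rwa [heq] at this

lemma vol_cball {n : ℕ} (c : Fin n → ℝ) {R : ℝ} (hR : 0 ≤ R) :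
    volume (closedBall c R) = ENNReal.ofReal ((2*R) ^ n) := by
  rw [volume_pi_closedBall c hR]
  simp_rw [Real.volume_closedBall]
  rw [Finset.prod_const, ENNReal.ofReal_pow (by linarith)]
  simp

lemma shell_lintegral (n : ℕ) (c : Fin n → ℝ) {r t : ℝ} (hr : 0 < r) (ht : 0 < t) :
    ∫⁻ y in (closedBall c r)ᶜ, ENNReal.ofReal (dist c y ^ (-((n:ℝ) + t))) ≤
      ENNReal.ofReal ((4:ℝ) ^ n * (1 - 2 ^ (-t))⁻¹ * r ^ (-t)) := by
  have h2t : (0:ℝ) < 2 ^ (-t) := Real.rpow_pos_of_pos two_pos _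
  have h2t1 : (2:ℝ) ^ (-t) < 1 :=
    Real.rpow_lt_one_of_one_lt_of_neg one_lt_two (by linarith)
  have key : ∀ y : Fin n → ℝ,
      ((closedBall c r)ᶜ).indicator (fun y => ENNReal.ofReal (dist c y ^ (-((n:ℝ) + t)))) y ≤
      ∑' j : ℕ, (closedBall c (2 ^ (j+1) * r)).indicator
        (fun _ => ENNReal.ofReal ((2 ^ j * r) ^ (-((n:ℝ) + t)))) y := by
    intro y
    by_cases hy : y ∈ (closedBall c r)ᶜ
    · rw [Set.indicator_of_mem hy]
      have hd : r < dist c y := by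
        simp only [mem_compl_iff, mem_closedBall, not_le, dist_comm] at hy; exact hy
      obtain ⟨j, hj1, hj2⟩ := exists_shell hr hd
      have hmem : y ∈ closedBall c (2 ^ (j+1) * r) := by
        rw [mem_closedBall, dist_comm]; exact hj2
      calc ENNReal.ofReal (dist c y ^ (-((n:ℝ) + t)))
          ≤ (closedBall c (2 ^ (j+1) * r)).indicator
            (fun _ => ENNReal.ofReal ((2 ^ j * r) ^ (-((n:ℝ) + t)))) y := by
            rw [Set.indicator_of_mem hmem]
            apply ENNReal.ofReal_le_ofReal
            apply Real.rpow_le_rpow_of_nonpos (by positivity) (le_of_lt hj1)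
            have : (0:ℝ) ≤ (n:ℝ) + t := by positivity
            linarith
        _ ≤ _ := ENNReal.le_tsum j
    · rw [Set.indicator_of_notMem hy]; exact zero_le
  calc ∫⁻ y in (closedBall c r)ᶜ, ENNReal.ofReal (dist c y ^ (-((n:ℝ) + t)))
      = ∫⁻ y, ((closedBall c r)ᶜ).indicator
          (fun y => ENNReal.ofReal (dist c y ^ (-((n:ℝ) + t)))) y := by
        rw [lintegral_indicator measurableSet_closedBall.compl]
    _ ≤ ∫⁻ y, ∑' j : ℕ, (closedBall c (2 ^ (j+1) * r)).indicator
          (fun _ => ENNReal.ofReal ((2 ^ j * r) ^ (-((n:ℝ) + t)))) y :=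
        lintegral_mono key
    _ = ∑' j : ℕ, ∫⁻ y, (closedBall c (2 ^ (j+1) * r)).indicator
          (fun _ => ENNReal.ofReal ((2 ^ j * r) ^ (-((n:ℝ) + t)))) y := by
        apply lintegral_tsum
        intro j
        exact (AEMeasurable.indicator (by measurability) measurableSet_closedBall)
    _ = ∑' j : ℕ, ENNReal.ofReal ((2 ^ j * r) ^ (-((n:ℝ) + t))) *
          volume (closedBall c (2 ^ (j+1) * r)) := by
        congr 1; funext j
        rw [lintegral_indicator measurableSet_closedBall, setLIntegral_const]
    _ = ∑' j : ℕ, ENNReal.ofReal ((4:ℝ) ^ n * r ^ (-t)) * (ENNReal.ofReal ((2:ℝ) ^ (-t))) ^ j := by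
        congr 1; funext j
        have hb : (0:ℝ) < 2 ^ j * r := by positivity
        rw [vol_cball c (by positivity)]
        rw [← ENNReal.ofReal_pow (le_of_lt h2t), ← ENNReal.ofReal_mul (by positivity)]
        congr 1
        have e1 : 2 * (2 ^ (j+1) * r) = 2 ^ j * r * 4 := by ring
        rw [e1, mul_pow]
        have e2 : -((n:ℝ) + t) = (-(n:ℝ)) + (-t) := by ring
        rw [e2, Real.rpow_add hb]
        have e3 : (2 ^ j * r) ^ (-(n:ℝ)) = ((2 ^ j * r) ^ n)⁻¹ := by
          rw [← Real.rpow_natCast (2 ^ j * r) n, ← Real.rpow_neg (le_of_lt hb)]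
        have e4 : (2 ^ j * r) ^ (-t) = ((2:ℝ) ^ (-t)) ^ j * r ^ (-t) := by
          rw [Real.mul_rpow (by positivity) hr.le]
          congr 1
          rw [← Real.rpow_natCast (2:ℝ) j, ← Real.rpow_mul (by norm_num),
            ← Real.rpow_natCast ((2:ℝ) ^ (-t)) j, ← Real.rpow_mul (by norm_num)]
          ring_nf
        rw [e3, e4]
        have hA0 : ((2:ℝ) ^ j * r) ^ n ≠ 0 := by positivity
        generalize hA : ((2:ℝ) ^ j * r) ^ n = A at hA0 ⊢
        rw [← ENNReal.ofReal_mul (by positivity)]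
        congr 1
        field_simp
    _ = ENNReal.ofReal ((4:ℝ) ^ n * r ^ (-t)) * (1 - ENNReal.ofReal ((2:ℝ) ^ (-t)))⁻¹ := by
        rw [ENNReal.tsum_mul_left, ENNReal.tsum_geometric]
    _ = ENNReal.ofReal ((4:ℝ) ^ n * (1 - 2 ^ (-t))⁻¹ * r ^ (-t)) := by
        rw [← ENNReal.ofReal_one, ← ENNReal.ofReal_sub _ (le_of_lt h2t),
          ← ENNReal.ofReal_inv_of_pos (by linarith), ← ENNReal.ofReal_mul (by positivity)]
        congr 1
        ring

lemma weight_meas (n : ℕ) (c : Fin n → ℝ) (r s : ℝ) :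
    Measurable (((closedBall c r)ᶜ).indicator (fun y => dist c y ^ s)) := by
  apply Measurable.indicator _ measurableSet_closedBall.compl
  exact (continuous_const.dist continuous_id).measurable.pow_const s

lemma weight_integrable (n : ℕ) (c : Fin n → ℝ) {r t : ℝ} (hr : 0 < r) (ht : 0 < t) :
    Integrable (((closedBall c r)ᶜ).indicator (fun y => dist c y ^ (-((n:ℝ) + t)))) volume ∧
    ∫ y, ((closedBall c r)ᶜ).indicator (fun y => dist c y ^ (-((n:ℝ) + t))) y ≤
      (4:ℝ) ^ n * (1 - 2 ^ (-t))⁻¹ * r ^ (-t) := by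
  set w := ((closedBall c r)ᶜ).indicator (fun y => dist c y ^ (-((n:ℝ) + t))) with hw
  have hwnn : ∀ y, 0 ≤ w y := by
    intro y
    apply Set.indicator_nonneg
    intro y _
    exact Real.rpow_nonneg dist_nonneg _
  have hlint : ∫⁻ y, ENNReal.ofReal (w y) ≤
      ENNReal.ofReal ((4:ℝ) ^ n * (1 - 2 ^ (-t))⁻¹ * r ^ (-t)) := by
    have : ∀ y, ENNReal.ofReal (w y) =
        ((closedBall c r)ᶜ).indicator (fun y => ENNReal.ofReal (dist c y ^ (-((n:ℝ) + t)))) y := by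
      intro y
      by_cases hy : y ∈ (closedBall c r)ᶜ
      · simp [hw, Set.indicator_of_mem hy]
      · simp [hw, Set.indicator_of_notMem hy]
    simp_rw [this]
    rw [lintegral_indicator measurableSet_closedBall.compl]
    exact shell_lintegral n c hr ht
  have hint : Integrable w volume := by
    refine ⟨(weight_meas n c r _).aestronglyMeasurable, ?_⟩
    rw [HasFiniteIntegral]
    calc ∫⁻ y, ‖w y‖ₑ = ∫⁻ y, ENNReal.ofReal (w y) := by
          congr 1; funext y
          rw [← Real.enorm_eq_ofReal (hwnn y)]
      _ ≤ _ := hlint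
      _ < ⊤ := ENNReal.ofReal_lt_top
  refine ⟨hint, ?_⟩
  rw [integral_eq_lintegral_of_nonneg_ae (Filter.Eventually.of_forall hwnn)
    hint.aestronglyMeasurable]
  calc (∫⁻ y, ENNReal.ofReal (w y)).toReal
      ≤ (ENNReal.ofReal ((4:ℝ) ^ n * (1 - 2 ^ (-t))⁻¹ * r ^ (-t))).toReal := by
        apply ENNReal.toReal_mono ENNReal.ofReal_ne_top hlint
    _ ≤ _ := by
        have h2t1 : (2:ℝ)^(-t) < 1 :=
          Real.rpow_lt_one_of_one_lt_of_neg one_lt_two (by linarith)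
        have h1 : (0:ℝ) ≤ (1 - 2^(-t))⁻¹ := inv_nonneg.mpr (by linarith)
        have h2 : (0:ℝ) ≤ r ^ (-t) := Real.rpow_nonneg hr.le _
        rw [ENNReal.toReal_ofReal (mul_nonneg (mul_nonneg (by positivity) h1) h2)]

lemma weight_memL2 (n : ℕ) (hn : 0 < n) (c : Fin n → ℝ) {r : ℝ} (hr : 0 < r) :
    MemLp (((closedBall c r)ᶜ).indicator (fun y => dist c y ^ (-(n:ℝ)))) 2 volume := by
  set w := ((closedBall c r)ᶜ).indicator (fun y => dist c y ^ (-(n:ℝ))) with hw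
  have hmeas : AEStronglyMeasurable w volume := (weight_meas n c r _).aestronglyMeasurable
  rw [memLp_two_iff_integrable_sq_norm hmeas]
  have : (fun y => ‖w y‖ ^ 2) =
      ((closedBall c r)ᶜ).indicator (fun y => dist c y ^ (-((n:ℝ) + n))) := by
    funext y
    by_cases hy : y ∈ (closedBall c r)ᶜ
    · rw [hw]
      simp only [Set.indicator_of_mem hy]
      have hd : (0:ℝ) < dist c y := by
        have : r < dist c y := by
          simp only [mem_compl_iff, mem_closedBall, not_le, dist_comm] at hy; exact hy
        linarith
      rw [Real.norm_eq_abs, abs_of_nonneg (Real.rpow_nonneg dist_nonneg _),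
        ← Real.rpow_natCast (dist c y ^ (-(n:ℝ))) 2, ← Real.rpow_mul dist_nonneg]
      congr 1
      push_cast
      ring
    · simp [hw, Set.indicator_of_notMem hy]
  rw [this]
  exact (weight_integrable n c hr (by exact_mod_cast hn)).1

lemma integrable_mul_L2 {n : ℕ} {f g : (Fin n → ℝ) → ℝ}
    (hf : MemLp f 2 (volume : Measure (Fin n → ℝ))) (hg : MemLp g 2 volume) :
    Integrable (fun y => f y * g y) volume := by
  have h := MeasureTheory.L2.integrable_inner (𝕜 := ℝ) (hf.toLp f) (hg.toLp g)
  refine (integrable_congr ?_).mp h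
  filter_upwards [hf.coeFn_toLp, hg.coeFn_toLp] with y h1 h2
  simp [h1, h2, RCLike.inner_apply, mul_comm]

lemma integral_norm_sq_eq {α : Type*} [MeasurableSpace α] {μ : Measure α}
    {E : Type*} [NormedAddCommGroup E] [InnerProductSpace ℂ E]
    (u : Lp E 2 μ) : ∫ x, ‖u x‖ ^ 2 ∂μ = ‖u‖ ^ 2 := by
  have h1 : (‖u‖ : ℝ) ^ 2 = RCLike.re (inner ℂ u u : ℂ) := by
    rw [← inner_self_eq_norm_sq (𝕜 := ℂ) u]
  rw [h1, MeasureTheory.L2.inner_def]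
  rw [← integral_re (MeasureTheory.L2.integrable_inner u u)]
  congr 1
  funext x
  rw [inner_self_eq_norm_sq]

lemma K_contOn {n : ℕ} {H : Type} [NormedAddCommGroup H] {C γ : ℝ} (hγ0 : 0 < γ)
    (hC : 0 ≤ C) {K : (Fin n → ℝ) → (Fin n → ℝ) → H} (hsm : SmoothCondition C γ K)
    (x : Fin n → ℝ) : ContinuousOn (fun y => K x y) {y | y ≠ x} := by
  intro y₀ hy₀
  have hd : 0 < dist x y₀ := dist_pos.mpr (Ne.symm hy₀)
  set d := dist x y₀ with hdd
  rw [Metric.continuousWithinAt_iff]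
  intro ε hε
  have hE : 0 < ε * d ^ ((n:ℝ) + γ) / (C + 1) := by positivity
  refine ⟨min (d/2) ((ε * d ^ ((n:ℝ) + γ) / (C + 1)) ^ (1/γ)), by positivity, ?_⟩
  intro y hy hdy
  have hy1 : dist y₀ y ≤ d / 2 := by
    rw [dist_comm]; exact le_of_lt (lt_of_lt_of_le hdy (min_le_left _ _))
  have hb := hsm.2 x y₀ y (Ne.symm hy₀) hy1
  have hflip : dist (K x y) (K x y₀) = ‖K x y₀ - K x y‖ := by
    rw [dist_eq_norm, ← norm_neg]; congr 1; abel
  rw [hflip]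
  refine lt_of_le_of_lt hb ?_
  have hpow : dist y₀ y ^ γ < ε * d ^ ((n:ℝ) + γ) / (C + 1) := by
    have h2 : dist y₀ y < (ε * d ^ ((n:ℝ) + γ) / (C + 1)) ^ (1/γ) := by
      rw [dist_comm]; exact lt_of_lt_of_le hdy (min_le_right _ _)
    calc dist y₀ y ^ γ < ((ε * d ^ ((n:ℝ) + γ) / (C + 1)) ^ (1/γ)) ^ γ :=
          Real.rpow_lt_rpow dist_nonneg h2 hγ0
      _ = ε * d ^ ((n:ℝ) + γ) / (C + 1) := by
          rw [← Real.rpow_mul (le_of_lt hE), one_div, inv_mul_cancel₀ (ne_of_gt hγ0),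
            Real.rpow_one]
  have hdpow : 0 < d ^ ((n:ℝ) + γ) := Real.rpow_pos_of_pos hd _
  have hnn : 0 ≤ dist y₀ y ^ γ := Real.rpow_nonneg dist_nonneg γ
  have h2 : C * dist y₀ y ^ γ < ε * d ^ ((n:ℝ) + γ) := by
    calc C * dist y₀ y ^ γ ≤ (C+1) * dist y₀ y ^ γ := by nlinarith
      _ < (C+1) * (ε * d ^ ((n:ℝ) + γ) / (C + 1)) :=
          mul_lt_mul_of_pos_left hpow (by linarith)
      _ = ε * d ^ ((n:ℝ) + γ) := by field_simp
  rw [div_lt_iff₀ hdpow]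
  exact h2

set_option maxHeartbeats 2000000 in
/-- **`L∞ → BMO` estimate for Hilbert-space-valued Calderón–Zygmund operators**
(commutative case of Theorem B2): for `f ∈ L² ∩ L∞` and every axis-parallel cube `Q`
(center `cQ`, side length `ℓ`),
`inf_(α ∈ H) (|Q|⁻¹ ∫_Q ‖Tf(x) - α‖² dx)^(1/2) ≤ c ‖f‖_∞` with `c = c(n, γ, C)`. -/
theorem cz_Linfty_BMO (n : ℕ) (hn : 0 < n)
    (C γ : ℝ) (hγ0 : 0 < γ) (hγ1 : γ ≤ 1) :
    ∃ c : ℝ, 0 < c ∧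
      ∀ (H : Type) [NormedAddCommGroup H] [InnerProductSpace ℂ H] [CompleteSpace H]
        (K : (Fin n → ℝ) → (Fin n → ℝ) → H)
        (T : Lp ℂ 2 (volume : Measure (Fin n → ℝ)) →L[ℂ]
          Lp H 2 (volume : Measure (Fin n → ℝ))),
        SizeCondition C K → SmoothCondition C γ K → IsCZOperator K T →
        (∀ g, ‖T g‖ ≤ ‖g‖) →
        ∀ (f : (Fin n → ℝ) → ℂ) (hf2 : MemLp f 2 (volume : Measure (Fin n → ℝ)))
          (M : ℝ), (∀ x, ‖f x‖ ≤ M) →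
        ∀ (cQ : Fin n → ℝ) (ℓ : ℝ), 0 < ℓ →
          (⨅ α : H,
            (⨍ x in closedBall cQ (ℓ / 2), ‖T (hf2.toLp f) x - α‖ ^ 2) ^ ((1 : ℝ) / 2)) ≤
            c * M := by
  set A₁ : ℝ := (4:ℝ)^n * (1 - 2^(-γ))⁻¹ with hA₁def
  set B₀ : ℝ := C * A₁ with hB₀def
  refine ⟨Real.sqrt (2*4^n + 2*B₀^2) + 1, by positivity, ?_⟩
  intro H _ _ _ K T hsize hsm hT hTb f hf2 M hM cQ ℓ hℓ
  have hM0 : 0 ≤ M := le_trans (norm_nonneg _) (hM 0)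
  -- C is nonnegative
  have hC : 0 ≤ C := by
    by_contra hCneg
    push_neg at hCneg
    set y₀ : Fin n → ℝ := fun _ => 1 with hy₀
    have hne : (0 : Fin n → ℝ) ≠ y₀ := by
      intro h
      have := congrFun h ⟨0, hn⟩
      simp [hy₀] at this
    have hdp : 0 < dist (0 : Fin n → ℝ) y₀ ^ n := pow_pos (dist_pos.mpr hne) n
    have h1 := hsize 0 y₀ hne
    have h2 : C / dist (0 : Fin n → ℝ) y₀ ^ n < 0 := div_neg_of_neg_of_pos hCneg hdp
    nlinarith [norm_nonneg (K 0 y₀)]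
  have hA₁nn : 0 ≤ A₁ := by
    have h2t1 : (2:ℝ)^(-γ) < 1 :=
      Real.rpow_lt_one_of_one_lt_of_neg one_lt_two (by linarith)
    rw [hA₁def]
    exact mul_nonneg (by positivity) (inv_nonneg.mpr (by linarith))
  have hB₀nn : 0 ≤ B₀ := mul_nonneg hC hA₁nn
  -- decomposition
  set Bs : Set (Fin n → ℝ) := closedBall cQ (2*ℓ) with hBs
  set f₁ : (Fin n → ℝ) → ℂ := Bs.indicator f with hf₁
  set f₂ : (Fin n → ℝ) → ℂ := Bsᶜ.indicator f with hf₂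
  have h1 : MemLp f₁ 2 volume := hf2.indicator measurableSet_closedBall
  have h2 : MemLp f₂ 2 volume := hf2.indicator measurableSet_closedBall.compl
  have hf₂M : ∀ y, ‖f₂ y‖ ≤ M := by
    intro y
    by_cases h : y ∈ Bsᶜ
    · rw [hf₂, Set.indicator_of_mem h]; exact hM y
    · rw [hf₂, Set.indicator_of_notMem h]; simpa using hM0
  have hUfar : ∀ y ∈ Bsᶜ, 2*ℓ < dist cQ y := by
    intro y hy
    simp only [hBs, mem_compl_iff, mem_closedBall, not_le, dist_comm] at hy
    exact hy
  -- geometric facts for x near the center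
  have hgeo : ∀ x : Fin n → ℝ, dist x cQ ≤ ℓ/2 → ∀ y ∈ Bsᶜ,
      x ≠ y ∧ (3/4) * dist cQ y ≤ dist x y := by
    intro x hx y hy
    have hy2 := hUfar y hy
    have htri : dist cQ y ≤ dist cQ x + dist x y := dist_triangle cQ x y
    rw [dist_comm cQ x] at htri
    constructor
    · intro hxy
      rw [hxy] at hx
      rw [dist_comm] at hx
      linarith
    · linarith
  set w : (Fin n → ℝ) → ℝ := Bsᶜ.indicator (fun y => dist cQ y ^ (-(n:ℝ))) with hwdef
  have hwmem : MemLp w 2 volume := weight_memL2 n hn cQ (by linarith)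
  have hwnn : ∀ y, 0 ≤ w y :=
    fun y => Set.indicator_nonneg (fun y _ => Real.rpow_nonneg dist_nonneg _) y
  set D : (Fin n → ℝ) → ℝ := fun y => (C * (4/3)^n) * (‖f y‖ * w y) with hDdef
  have hDint : Integrable D volume := (integrable_mul_L2 hf2.norm hwmem).const_mul _
  have hDnn : ∀ y, 0 ≤ D y := by
    intro y
    exact mul_nonneg (by positivity) (mul_nonneg (norm_nonneg _) (hwnn y))
  -- pointwise domination of the integrand
  have hKle : ∀ x : Fin n → ℝ, dist x cQ ≤ ℓ/2 → ∀ y, ‖f₂ y • K x y‖ ≤ D y := by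
    intro x hx y
    by_cases hy : y ∈ Bsᶜ
    · obtain ⟨hxy, hdist⟩ := hgeo x hx y hy
      have hy2 := hUfar y hy
      have hdcy : 0 < dist cQ y := by linarith
      have h34 : (0:ℝ) < (3/4) * dist cQ y := by linarith
      rw [norm_smul, hf₂, Set.indicator_of_mem hy]
      have hK := hsize x y hxy
      have step : C / dist x y ^ n ≤ C / ((3/4) * dist cQ y) ^ n :=
        div_le_div_of_nonneg_left hC (pow_pos h34 n) (pow_le_pow_left₀ h34.le hdist n)
      have e : C / ((3/4) * dist cQ y) ^ n = C * (4/3)^n * (dist cQ y ^ (-(n:ℝ))) := by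
        rw [Real.rpow_neg hdcy.le, Real.rpow_natCast, mul_pow]
        rw [show ((4:ℝ)/3)^n = (((3:ℝ)/4)^n)⁻¹ by rw [← inv_pow]; norm_num]
        have h1 : ((3:ℝ)/4)^n ≠ 0 := by positivity
        have h2 : (dist cQ y)^n ≠ 0 := by positivity
        field_simp
      have hKb : ‖K x y‖ ≤ C * (4/3)^n * w y := by
        rw [hwdef, Set.indicator_of_mem hy]
        calc ‖K x y‖ ≤ C / dist x y ^ n := hK
          _ ≤ C / ((3/4) * dist cQ y) ^ n := step
          _ = C * (4/3)^n * dist cQ y ^ (-(n:ℝ)) := e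
      calc ‖f y‖ * ‖K x y‖ ≤ ‖f y‖ * (C * (4/3)^n * w y) :=
            mul_le_mul_of_nonneg_left hKb (norm_nonneg _)
        _ = D y := by rw [hDdef]; ring
    · rw [hf₂, Set.indicator_of_notMem hy]
      simp only [zero_smul, norm_zero]
      exact hDnn y
  -- measurability of the integrand
  have hmeasI : ∀ x : Fin n → ℝ, dist x cQ ≤ ℓ/2 →
      AEStronglyMeasurable (fun y => f₂ y • K x y) volume := by
    intro x hx
    have heq : (fun y => f₂ y • K x y) = Bsᶜ.indicator (fun y => f y • K x y) := by
      funext y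
      by_cases hy : y ∈ Bsᶜ
      · rw [hf₂, Set.indicator_of_mem hy, Set.indicator_of_mem hy]
      · rw [hf₂, Set.indicator_of_notMem hy, Set.indicator_of_notMem hy, zero_smul]
    rw [heq]
    rw [aestronglyMeasurable_indicator_iff measurableSet_closedBall.compl]
    apply AEStronglyMeasurable.smul
    · exact hf2.aestronglyMeasurable.restrict
    · have hsub : Bsᶜ ⊆ {y | y ≠ x} := by
        intro y hy
        have h2 := hUfar y hy
        intro hyx
        rw [hyx, dist_comm] at h2
        linarith
      exact ((K_contOn hγ0 hC hsm x).mono hsub).aestronglyMeasurable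
        measurableSet_closedBall.compl
  have hintI : ∀ x : Fin n → ℝ, dist x cQ ≤ ℓ/2 →
      Integrable (fun y => f₂ y • K x y) volume := by
    intro x hx
    exact Integrable.mono' hDint (hmeasI x hx) (Filter.Eventually.of_forall (hKle x hx))
  set g : (Fin n → ℝ) → H := fun x => ∫ y, f₂ y • K x y with hgdef
  set α : H := g cQ with hα
  -- the difference bound
  have hdiff : ∀ x : Fin n → ℝ, dist x cQ ≤ ℓ/2 → ‖g x - α‖ ≤ B₀ * M := by
    intro x hx
    have hint1 := hintI x hx
    have hint0 := hintI cQ (by rw [dist_self]; linarith)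
    have hsub2 : g x - α = ∫ y, (f₂ y • K x y - f₂ y • K cQ y) := by
      rw [integral_sub hint1 hint0]
    rw [hsub2]
    set P : (Fin n → ℝ) → ℝ := Bsᶜ.indicator (fun y => dist cQ y ^ (-((n:ℝ)+γ))) with hPdef
    have hPint := (weight_integrable n cQ (r := 2*ℓ) (by linarith) hγ0).1
    have hPbnd := (weight_integrable n cQ (r := 2*ℓ) (by linarith) hγ0).2
    have hptw : ∀ y, ‖f₂ y • K x y - f₂ y • K cQ y‖ ≤ M * (C * (ℓ/2)^γ) * P y := by
      intro y
      by_cases hy : y ∈ Bsᶜ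
      · have hy2 := hUfar y hy
        have hdcy : (0:ℝ) < dist cQ y := by linarith
        have hne : cQ ≠ y := by
          intro h
          rw [h, dist_self] at hdcy
          exact lt_irrefl _ hdcy
        have hhalf : dist cQ x ≤ dist cQ y / 2 := by rw [dist_comm]; linarith
        have hb := hsm.1 cQ x y hne hhalf
        have hb2 : ‖K x y - K cQ y‖ ≤ C * (ℓ/2)^γ * dist cQ y ^ (-((n:ℝ)+γ)) := by
          rw [norm_sub_rev]
          refine le_trans hb ?_
          rw [Real.rpow_neg hdcy.le, div_eq_mul_inv]
          apply mul_le_mul_of_nonneg_right ?_ (inv_nonneg.mpr (Real.rpow_nonneg hdcy.le _))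
          apply mul_le_mul_of_nonneg_left ?_ hC
          apply Real.rpow_le_rpow dist_nonneg ?_ hγ0.le
          rw [dist_comm]
          exact hx
        calc ‖f₂ y • K x y - f₂ y • K cQ y‖ = ‖f₂ y‖ * ‖K x y - K cQ y‖ := by
              rw [← smul_sub, norm_smul]
          _ ≤ M * (C * (ℓ/2)^γ * dist cQ y ^ (-((n:ℝ)+γ))) := by
              apply mul_le_mul (hf₂M y) hb2 (norm_nonneg _) hM0
          _ = M * (C * (ℓ/2)^γ) * P y := by
              rw [hPdef, Set.indicator_of_mem hy]; ring
      · have hz : f₂ y = 0 := by rw [hf₂, Set.indicator_of_notMem hy]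
        have hz2 : P y = 0 := by rw [hPdef, Set.indicator_of_notMem hy]
        rw [hz, hz2]
        simp
    have hq : (ℓ/2)^γ * (2*ℓ)^(-γ) ≤ 1 := by
      have hd : ((ℓ/2)/(2*ℓ) : ℝ)^γ = (ℓ/2)^γ / (2*ℓ)^γ :=
        Real.div_rpow (by positivity) (by positivity) γ
      have he : ((ℓ/2)/(2*ℓ) : ℝ) = 1/4 := by
        field_simp
        ring
      rw [Real.rpow_neg (by positivity), ← div_eq_mul_inv, ← hd, he]
      apply Real.rpow_le_one (by norm_num) (by norm_num) hγ0.le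
    calc ‖∫ y, (f₂ y • K x y - f₂ y • K cQ y)‖
        ≤ ∫ y, ‖f₂ y • K x y - f₂ y • K cQ y‖ := norm_integral_le_integral_norm _
      _ ≤ ∫ y, M * (C * (ℓ/2)^γ) * P y := by
          apply integral_mono_of_nonneg (Filter.Eventually.of_forall (fun y => norm_nonneg _))
            (hPint.const_mul _) (Filter.Eventually.of_forall hptw)
      _ = M * (C * (ℓ/2)^γ) * ∫ y, P y := integral_const_mul _ _
      _ ≤ M * (C * (ℓ/2)^γ) * (A₁ * (2*ℓ)^(-γ)) := by
          apply mul_le_mul_of_nonneg_left ?_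
            (mul_nonneg hM0 (by positivity))
          calc ∫ y, P y ≤ (4:ℝ)^n * (1-2^(-γ))⁻¹ * (2*ℓ)^(-γ) := hPbnd
            _ = A₁ * (2*ℓ)^(-γ) := by rw [hA₁def]
      _ ≤ B₀ * M := by
          have h1 : M * (C * (ℓ/2)^γ) * (A₁ * (2*ℓ)^(-γ)) =
              (C * A₁ * M) * ((ℓ/2)^γ * (2*ℓ)^(-γ)) := by ring
          rw [h1, hB₀def]
          have h2 : 0 ≤ C * A₁ * M := mul_nonneg (mul_nonneg hC hA₁nn) hM0
          nlinarith [mul_le_mul_of_nonneg_left hq h2]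
  -- the representation
  have hrep : ∀ᵐ x ∂(volume : Measure (Fin n → ℝ)),
      dist x cQ ≤ ℓ/2 → T (h2.toLp f₂) x = g x := by
    classical
    set fR : ℕ → (Fin n → ℝ) → ℂ :=
      fun R => (closedBall (0 : Fin n → ℝ) ((R:ℝ)+1)).indicator f₂ with hfR
    have hmemR : ∀ R : ℕ, MemLp (fR R) 2 volume :=
      fun R => h2.indicator measurableSet_closedBall
    have hMR : ∀ (R : ℕ) y, ‖fR R y‖ ≤ M := by
      intro R y
      by_cases hy : y ∈ closedBall (0 : Fin n → ℝ) ((R:ℝ)+1)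
      · simp only [hfR]; rw [Set.indicator_of_mem hy]; exact hf₂M y
      · simp only [hfR]; rw [Set.indicator_of_notMem hy]; simpa using hM0
    have hcsR : ∀ R : ℕ, HasCompactSupport (fR R) := by
      intro R
      apply HasCompactSupport.intro (isCompact_closedBall (0 : Fin n → ℝ) ((R:ℝ)+1))
      intro y hy
      simp only [hfR]
      exact Set.indicator_of_notMem hy _
    have hCZR : ∀ R : ℕ, ∀ᵐ x ∂(volume : Measure (Fin n → ℝ)),
        x ∉ tsupport (fR R) → T ((hmemR R).toLp (fR R)) x = ∫ y, fR R y • K x y :=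
      fun R => hT (fR R) (hmemR R) M (hMR R) (hcsR R)
    have htsupp : ∀ R : ℕ, tsupport (fR R) ⊆ (ball cQ (2*ℓ))ᶜ := by
      intro R
      apply closure_minimal ?_ isOpen_ball.isClosed_compl
      intro z hz
      have hzBs : z ∈ Bsᶜ := by
        by_contra hzB
        apply hz
        have hf₂z : f₂ z = 0 := by rw [hf₂]; exact Set.indicator_of_notMem hzB _
        simp only [hfR]
        by_cases hzc : z ∈ closedBall (0 : Fin n → ℝ) ((R:ℝ)+1)
        · rw [Set.indicator_of_mem hzc]; exact hf₂z
        · exact Set.indicator_of_notMem hzc _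
      exact (compl_subset_compl.mpr ball_subset_closedBall) hzBs
    -- L² convergence of the truncations
    have hL2 : Tendsto (fun R : ℕ => eLpNorm (fR R - f₂) 2 volume) atTop (𝓝 0) := by
      have heq : ∀ R : ℕ, eLpNorm (fR R - f₂) 2 volume =
          eLpNorm (((closedBall (0:Fin n → ℝ) ((R:ℝ)+1))ᶜ).indicator f₂) 2 volume := by
        intro R
        have hfun : (fR R - f₂) =
            -(((closedBall (0:Fin n → ℝ) ((R:ℝ)+1))ᶜ).indicator f₂) := by
          funext y
          by_cases hy : y ∈ closedBall (0:Fin n → ℝ) ((R:ℝ)+1)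
          · have h1 : fR R y = f₂ y := by simp only [hfR]; rw [Set.indicator_of_mem hy]
            have h2' : y ∉ (closedBall (0:Fin n → ℝ) ((R:ℝ)+1))ᶜ := fun h => h hy
            simp [h1, Set.indicator_of_notMem h2']
          · have h1 : fR R y = 0 := by simp only [hfR]; rw [Set.indicator_of_notMem hy]
            have h2' : y ∈ (closedBall (0:Fin n → ℝ) ((R:ℝ)+1))ᶜ := hy
            simp [h1, Set.indicator_of_mem h2']
        rw [hfun, eLpNorm_neg]
      simp_rw [heq]
      have hJ : Tendsto (fun R : ℕ => ∫⁻ y,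
          (‖(((closedBall (0:Fin n → ℝ) ((R:ℝ)+1))ᶜ).indicator f₂) y‖₊ : ℝ≥0∞) ^ (2:ℕ)
            ∂volume) atTop (𝓝 0) := by
        have hbnd : ∫⁻ y, (‖f₂ y‖₊ : ℝ≥0∞) ^ (2:ℕ) ∂volume < ⊤ := by
          have h := lintegral_rpow_enorm_lt_top_of_eLpNorm_lt_top (p := 2) (f := f₂)
            two_ne_zero ENNReal.ofNat_ne_top h2.2
          have h2e : ((2:ℝ≥0∞)).toReal = ((2:ℕ):ℝ) := by simp
          rw [h2e] at h
          simp only [ENNReal.rpow_natCast] at h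
          exact h
        have htend := tendsto_lintegral_of_dominated_convergence'
          (μ := (volume : Measure (Fin n → ℝ)))
          (F := fun (R : ℕ) y =>
            (‖(((closedBall (0:Fin n → ℝ) ((R:ℝ)+1))ᶜ).indicator f₂) y‖₊ : ℝ≥0∞) ^ (2:ℕ))
          (f := fun _ => 0) (bound := fun y => (‖f₂ y‖₊ : ℝ≥0∞) ^ (2:ℕ))
          ?_ ?_ ?_ ?_
        · simpa using htend
        · intro R
          exact ((h2.aestronglyMeasurable.indicator
            measurableSet_closedBall.compl).enorm).pow_const 2
        · intro R
          apply Filter.Eventually.of_forall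
          intro y
          apply pow_le_pow_left' ?_ 2
          by_cases hy : y ∈ (closedBall (0:Fin n → ℝ) ((R:ℝ)+1))ᶜ
          · rw [Set.indicator_of_mem hy]
          · rw [Set.indicator_of_notMem hy]; simp
        · exact hbnd.ne
        · apply Filter.Eventually.of_forall
          intro y
          apply Tendsto.congr' ?_ tendsto_const_nhds
          filter_upwards [Filter.eventually_ge_atTop ⌈‖y‖⌉₊] with R hR
          have hy : y ∈ closedBall (0:Fin n → ℝ) ((R:ℝ)+1) := by
            rw [mem_closedBall, dist_zero_right]
            calc ‖y‖ ≤ ⌈‖y‖⌉₊ := Nat.le_ceil _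
              _ ≤ (R:ℝ) := by exact_mod_cast hR
              _ ≤ (R:ℝ) + 1 := by linarith
          have hy2 : y ∉ (closedBall (0:Fin n → ℝ) ((R:ℝ)+1))ᶜ := fun h => h hy
          rw [Set.indicator_of_notMem hy2]
          simp
      have hconv : ∀ R : ℕ,
          eLpNorm (((closedBall (0:Fin n → ℝ) ((R:ℝ)+1))ᶜ).indicator f₂) 2 volume
          = (∫⁻ y, (‖(((closedBall (0:Fin n → ℝ) ((R:ℝ)+1))ᶜ).indicator f₂) y‖₊ : ℝ≥0∞) ^ (2:ℕ)
              ∂volume) ^ (1/2 : ℝ) := by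
        intro R
        rw [eLpNorm_eq_lintegral_rpow_enorm_toReal two_ne_zero ENNReal.ofNat_ne_top]
        have h2e : ((2:ℝ≥0∞)).toReal = ((2:ℕ):ℝ) := by simp
        rw [h2e]
        simp_rw [ENNReal.rpow_natCast]
        norm_num
        rfl
      simp_rw [hconv]
      have h0 : (0:ℝ≥0∞) = (0:ℝ≥0∞) ^ (1/2:ℝ) := (ENNReal.zero_rpow_of_pos (by norm_num)).symm
      rw [h0]
      exact (ENNReal.continuous_rpow_const.tendsto 0).comp hJ
    -- convergence in L² of the images under T
    have hTnorm : Tendsto (fun R : ℕ =>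
        eLpNorm ((T ((hmemR R).toLp (fR R)) : (Fin n → ℝ) → H) - (T (h2.toLp f₂) : (Fin n → ℝ) → H))
          2 volume) atTop (𝓝 0) := by
      have hle : ∀ R : ℕ,
          eLpNorm ((T ((hmemR R).toLp (fR R)) : (Fin n → ℝ) → H) - (T (h2.toLp f₂) : (Fin n → ℝ) → H)) 2 volume
            ≤ eLpNorm (fR R - f₂) 2 volume := by
        intro R
        have e1 : eLpNorm ((T ((hmemR R).toLp (fR R)) : (Fin n → ℝ) → H)
            - (T (h2.toLp f₂) : (Fin n → ℝ) → H)) 2 volume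
            = eLpNorm (T ((hmemR R).toLp (fR R)) - T (h2.toLp f₂) : Lp H 2 volume) 2 volume := by
          apply eLpNorm_congr_ae
          filter_upwards [Lp.coeFn_sub (T ((hmemR R).toLp (fR R))) (T (h2.toLp f₂))] with y hy
          rw [hy]
        rw [e1]
        have e2 : eLpNorm (T ((hmemR R).toLp (fR R)) - T (h2.toLp f₂) : Lp H 2 volume) 2 volume
            = ENNReal.ofReal ‖T ((hmemR R).toLp (fR R)) - T (h2.toLp f₂)‖ := by
          rw [Lp.norm_def, ENNReal.ofReal_toReal (Lp.eLpNorm_ne_top _)]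
        rw [e2]
        have e3 : ‖T ((hmemR R).toLp (fR R)) - T (h2.toLp f₂)‖ ≤ (eLpNorm (fR R - f₂) 2 volume).toReal := by
          rw [← map_sub]
          refine le_trans (hTb _) ?_
          have e4 : (hmemR R).toLp (fR R) - h2.toLp f₂ = ((hmemR R).sub h2).toLp (fR R - f₂) := by
            rw [MemLp.toLp_sub]
          rw [e4, Lp.norm_toLp]
        refine le_trans (ENNReal.ofReal_le_ofReal e3) ?_
        rw [ENNReal.ofReal_toReal ((hmemR R).sub h2).eLpNorm_ne_top]
      apply tendsto_of_tendsto_of_tendsto_of_le_of_le tendsto_const_nhds hL2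
        (fun R => zero_le) hle
    have hTIM : TendstoInMeasure volume
        (fun R : ℕ => (T ((hmemR R).toLp (fR R)) : (Fin n → ℝ) → H)) atTop
        (T (h2.toLp f₂) : (Fin n → ℝ) → H) :=
      tendstoInMeasure_of_tendsto_eLpNorm (by norm_num)
        (fun R => Lp.aestronglyMeasurable _) (Lp.aestronglyMeasurable _) hTnorm
    obtain ⟨ns, hns, haecv⟩ := hTIM.exists_seq_tendsto_ae
    have hCZall : ∀ᵐ x ∂(volume : Measure (Fin n → ℝ)), ∀ i : ℕ,
        x ∉ tsupport (fR (ns i)) →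
        T ((hmemR (ns i)).toLp (fR (ns i))) x = ∫ y, fR (ns i) y • K x y :=
      ae_all_iff.mpr (fun i => hCZR (ns i))
    filter_upwards [hCZall, haecv] with x hx1 hx2
    intro hxQ
    have hxball : x ∈ ball cQ (2*ℓ) := by
      rw [mem_ball]
      linarith
    have heval : ∀ i : ℕ, T ((hmemR (ns i)).toLp (fR (ns i))) x = ∫ y, fR (ns i) y • K x y :=
      fun i => hx1 i (fun hmem => (htsupp (ns i) hmem) hxball)
    have hdom : Tendsto (fun R : ℕ => ∫ y, fR R y • K x y) atTop (𝓝 (g x)) := by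
      apply tendsto_integral_of_dominated_convergence D ?_ hDint ?_ ?_
      · intro R
        have heq2 : (fun y => fR R y • K x y) =
            (closedBall (0:Fin n → ℝ) ((R:ℝ)+1)).indicator (fun y => f₂ y • K x y) := by
          funext y
          by_cases hy : y ∈ closedBall (0:Fin n → ℝ) ((R:ℝ)+1)
          · simp only [hfR]
            rw [Set.indicator_of_mem hy, Set.indicator_of_mem hy]
          · simp only [hfR]
            rw [Set.indicator_of_notMem hy, Set.indicator_of_notMem hy, zero_smul]
        rw [heq2]
        exact (hmeasI x hxQ).indicator measurableSet_closedBall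
      · intro R
        apply Filter.Eventually.of_forall
        intro y
        by_cases hy : y ∈ closedBall (0:Fin n → ℝ) ((R:ℝ)+1)
        · have hfy : fR R y = f₂ y := by simp only [hfR]; rw [Set.indicator_of_mem hy]
          rw [hfy]
          exact hKle x hxQ y
        · have hfy : fR R y = 0 := by simp only [hfR]; rw [Set.indicator_of_notMem hy]
          rw [hfy]
          simp only [zero_smul, norm_zero]
          exact hDnn y
      · apply Filter.Eventually.of_forall
        intro y
        apply Tendsto.congr' ?_ tendsto_const_nhds
        filter_upwards [Filter.eventually_ge_atTop ⌈‖y‖⌉₊] with R hR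
        have hy : y ∈ closedBall (0:Fin n → ℝ) ((R:ℝ)+1) := by
          rw [mem_closedBall, dist_zero_right]
          calc ‖y‖ ≤ ⌈‖y‖⌉₊ := Nat.le_ceil _
            _ ≤ (R:ℝ) := by exact_mod_cast hR
            _ ≤ (R:ℝ) + 1 := by linarith
        have hfy : fR R y = f₂ y := by simp only [hfR]; rw [Set.indicator_of_mem hy]
        rw [hfy]
    have hdom2 : Tendsto (fun i : ℕ => ∫ y, fR (ns i) y • K x y) atTop (𝓝 (g x)) :=
      hdom.comp hns.tendsto_atTop
    have hlhs : Tendsto (fun i : ℕ => T ((hmemR (ns i)).toLp (fR (ns i))) x) atTop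
        (𝓝 (g x)) := hdom2.congr (fun i => (heval i).symm)
    exact tendsto_nhds_unique hx2 hlhs
  -- splitting T f = T f₁ + T f₂
  have hsum : ∀ᵐ x ∂(volume : Measure (Fin n → ℝ)),
      T (hf2.toLp f) x = T (h1.toLp f₁) x + T (h2.toLp f₂) x := by
    have hfeq : hf2.toLp f = h1.toLp f₁ + h2.toLp f₂ := by
      rw [← MemLp.toLp_add h1 h2]
      apply MemLp.toLp_congr
      apply Filter.Eventually.of_forall
      intro y
      conv_lhs => rw [← Set.indicator_self_add_compl Bs f]
    rw [hfeq, map_add]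
    filter_upwards [Lp.coeFn_add (T (h1.toLp f₁)) (T (h2.toLp f₂))] with x hx
    exact hx
  -- final assembly
  set Qs : Set (Fin n → ℝ) := closedBall cQ (ℓ/2) with hQs
  have hQvol : volume Qs = ENNReal.ofReal (ℓ^n) := by
    rw [hQs, vol_cball cQ (by linarith)]
    congr 1
    ring_nf
  have hQne : volume Qs ≠ ⊤ := by rw [hQvol]; exact ENNReal.ofReal_ne_top
  haveI hfinQ : IsFiniteMeasure (volume.restrict Qs) :=
    ⟨by rw [Measure.restrict_apply_univ]; exact lt_of_le_of_ne le_top hQne⟩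
  have hQto : (volume Qs).toReal = ℓ^n := by
    rw [hQvol, ENNReal.toReal_ofReal (by positivity)]
  have hBvol : (volume Bs).toReal = (4*ℓ)^n := by
    rw [hBs, vol_cball cQ (by linarith), ENNReal.toReal_ofReal (by positivity)]
    ring_nf
  set T1 := T (h1.toLp f₁) with hT1
  set T2 := T (h2.toLp f₂) with hT2
  set Tf := T (hf2.toLp f) with hTf
  have memTfα : MemLp (fun x => Tf x - α) 2 (volume.restrict Qs) :=
    ((Lp.memLp Tf).restrict Qs).sub (memLp_const α)
  have intTfα : Integrable (fun x => ‖Tf x - α‖^2) (volume.restrict Qs) :=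
    (memLp_two_iff_integrable_sq_norm memTfα.aestronglyMeasurable).mp memTfα
  have intT1glob : Integrable (fun x => ‖T1 x‖^2) volume :=
    (memLp_two_iff_integrable_sq_norm (Lp.aestronglyMeasurable T1)).mp (Lp.memLp T1)
  have intRHS : Integrable (fun x => 2*‖T1 x‖^2 + 2*(B₀*M)^2) (volume.restrict Qs) :=
    ((intT1glob.restrict).const_mul 2).add (integrable_const _)
  have haeQ : ∀ᵐ x ∂(volume.restrict Qs),
      ‖Tf x - α‖^2 ≤ 2*‖T1 x‖^2 + 2*(B₀*M)^2 := by
    have hmem := ae_restrict_mem (μ := (volume : Measure (Fin n → ℝ))) (measurableSet_closedBall : MeasurableSet Qs)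
    filter_upwards [hmem, ae_restrict_of_ae hsum, ae_restrict_of_ae hrep] with x hxQ hx1 hx2
    have hxd : dist x cQ ≤ ℓ/2 := by simpa [hQs, mem_closedBall] using hxQ
    have h2x := hx2 hxd
    have hb1 : ‖Tf x - α‖ ≤ ‖T1 x‖ + B₀*M := by
      rw [hx1, add_sub_assoc]
      refine le_trans (norm_add_le _ _) ?_
      have h3 : ‖T2 x - α‖ ≤ B₀*M := by rw [h2x]; exact hdiff x hxd
      linarith
    nlinarith [hb1, norm_nonneg (Tf x - α), norm_nonneg (T1 x),
      mul_nonneg hB₀nn hM0, sq_nonneg (‖T1 x‖ - B₀*M)]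
  have hIntQ : ∫ x in Qs, ‖Tf x - α‖^2 ≤ ∫ x in Qs, (2*‖T1 x‖^2 + 2*(B₀*M)^2) :=
    integral_mono_ae intTfα intRHS haeQ
  have hT1Q : ∫ x in Qs, ‖T1 x‖^2 ≤ M^2 * (4*ℓ)^n := by
    have step1 : ∫ x in Qs, ‖T1 x‖^2 ≤ ∫ x, ‖T1 x‖^2 :=
      setIntegral_le_integral intT1glob (Filter.Eventually.of_forall (fun x => by positivity))
    have step2 : ∫ x, ‖T1 x‖^2 = ‖T1‖^2 := integral_norm_sq_eq T1
    have step3 : ‖T1‖^2 ≤ ‖h1.toLp f₁‖^2 :=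
      pow_le_pow_left₀ (norm_nonneg _) (hTb _) 2
    have step4 : ‖h1.toLp f₁‖^2 = ∫ x, ‖f₁ x‖^2 := by
      rw [← integral_norm_sq_eq (h1.toLp f₁)]
      apply integral_congr_ae
      filter_upwards [h1.coeFn_toLp] with x hx
      rw [hx]
    have step5 : ∫ x, ‖f₁ x‖^2 ≤ M^2 * (4*ℓ)^n := by
      have e : (fun x => ‖f₁ x‖^2) = Bs.indicator (fun x => ‖f x‖^2) := by
        funext x
        by_cases hx : x ∈ Bs
        · rw [hf₁, Set.indicator_of_mem hx, Set.indicator_of_mem hx]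
        · rw [hf₁, Set.indicator_of_notMem hx, Set.indicator_of_notMem hx]
          simp
      rw [e, integral_indicator measurableSet_closedBall]
      have intfB : Integrable (fun x => ‖f x‖^2) (volume.restrict Bs) := by
        haveI : IsFiniteMeasure (volume.restrict Bs) := by
          refine ⟨?_⟩
          rw [Measure.restrict_apply_univ, hBs, vol_cball cQ (R := 2*ℓ) (by linarith)]
          exact ENNReal.ofReal_lt_top
        exact (memLp_two_iff_integrable_sq_norm
          (hf2.restrict Bs).aestronglyMeasurable).mp (hf2.restrict Bs)
      haveI : IsFiniteMeasure (volume.restrict Bs) := by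
        refine ⟨?_⟩
        rw [Measure.restrict_apply_univ, hBs, vol_cball cQ (R := 2*ℓ) (by linarith)]
        exact ENNReal.ofReal_lt_top
      calc ∫ x in Bs, ‖f x‖^2 ≤ ∫ _x in Bs, M^2 := by
            apply integral_mono_ae intfB (integrable_const _)
            apply Filter.Eventually.of_forall
            intro x
            have := hM x
            simpa using pow_le_pow_left₀ (norm_nonneg (f x)) this 2
        _ = M^2 * (4*ℓ)^n := by
            rw [setIntegral_const, smul_eq_mul, measureReal_def, hBvol]
            ring
    calc ∫ x in Qs, ‖T1 x‖^2 ≤ ∫ x, ‖T1 x‖^2 := step1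
      _ = ‖T1‖^2 := step2
      _ ≤ ‖h1.toLp f₁‖^2 := step3
      _ = ∫ x, ‖f₁ x‖^2 := step4
      _ ≤ M^2 * (4*ℓ)^n := step5
  have havg : (⨍ x in Qs, ‖Tf x - α‖^2) ≤ (2*4^n + 2*B₀^2) * M^2 := by
    rw [setAverage_eq, smul_eq_mul, measureReal_def, hQto]
    have hRHSval : ∫ x in Qs, (2*‖T1 x‖^2 + 2*(B₀*M)^2) =
        2*(∫ x in Qs, ‖T1 x‖^2) + 2*(B₀*M)^2 * ℓ^n := by
      rw [integral_add ((intT1glob.restrict).const_mul 2) (integrable_const _),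
        integral_const_mul, setIntegral_const, smul_eq_mul, measureReal_def, hQto]
      ring
    have htotal : ∫ x in Qs, ‖Tf x - α‖^2 ≤ 2*(M^2*(4*ℓ)^n) + 2*(B₀*M)^2*ℓ^n := by
      refine le_trans hIntQ ?_
      rw [hRHSval]
      nlinarith [hT1Q]
    have hinv : (0:ℝ) ≤ (ℓ^n)⁻¹ := by positivity
    calc (ℓ^n)⁻¹ * ∫ x in Qs, ‖Tf x - α‖^2
        ≤ (ℓ^n)⁻¹ * (2*(M^2*(4*ℓ)^n) + 2*(B₀*M)^2*ℓ^n) :=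
          mul_le_mul_of_nonneg_left htotal hinv
      _ = (2*4^n + 2*B₀^2) * M^2 := by
          have hln : (ℓ:ℝ)^n ≠ 0 := by positivity
          field_simp
          ring
  have havgnn : ∀ β : H, 0 ≤ ⨍ x in Qs, ‖Tf x - β‖^2 := by
    intro β
    rw [setAverage_eq, smul_eq_mul]
    apply mul_nonneg (inv_nonneg.mpr ENNReal.toReal_nonneg)
    apply integral_nonneg
    intro x
    positivity
  have hc0 : (0:ℝ) ≤ 2*4^n + 2*B₀^2 := by positivity
  refine le_trans (ciInf_le ?_ α) ?_
  · refine ⟨0, ?_⟩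
    rintro v ⟨β, rfl⟩
    exact Real.rpow_nonneg (havgnn β) _
  · calc (⨍ x in Qs, ‖Tf x - α‖^2) ^ ((1:ℝ)/2)
        ≤ ((2*4^n + 2*B₀^2) * M^2) ^ ((1:ℝ)/2) :=
          Real.rpow_le_rpow (havgnn α) havg (by norm_num)
      _ = Real.sqrt ((2*4^n + 2*B₀^2) * M^2) := by
          rw [Real.sqrt_eq_rpow]
      _ = Real.sqrt (2*4^n + 2*B₀^2) * M := by
          rw [Real.sqrt_mul hc0, Real.sqrt_sq hM0]
      _ ≤ (Real.sqrt (2*4^n + 2*B₀^2) + 1) * M := by nlinarith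

end
end
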